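/- arXiv:1804.06925 — 4 statements merged into one kernel-verified Lean document; each statement's English description precedes it below -/
import Mathlib

section
/- Proximity bound via the conjugate pair: let f be a nondegenerate a-self-concordant function (its Hessian is positive definite on its domain) with Legendre–Fenchel conjugate f_*. Then for every x in the domain of f and every y in the domain of f_*, with r := a^{−1/2}·‖y − f'(x)‖_{[f''(x)]^{−1}}, one has a·ρ(r) ≤ f(x) + f_*(y) − ⟨y,x⟩ ≤ a·ρ(−r). -/
open Matrix Filter

noncomputable section

/-- Gradient of `f : ℝ^m → ℝ` (vector of partial derivatives). -/
def vgrad {m : ℕ} (f : (Fin m → ℝ) → ℝ) (x : Fin m → ℝ) : Fin m → ℝ :=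
  fun i => fderiv ℝ f x (Pi.single i 1)

/-- Hessian matrix of `f : ℝ^m → ℝ`. -/
def vhess {m : ℕ} (f : (Fin m → ℝ) → ℝ) (x : Fin m → ℝ) : Matrix (Fin m) (Fin m) ℝ :=
  Matrix.of fun i j => iteratedFDeriv ℝ 2 f x ![Pi.single i 1, Pi.single j 1]

/-- `f` is an `a`-self-concordant function with (open convex) domain `Q`. -/
def IsSelfConcordant {E : Type*} [NormedAddCommGroup E] [NormedSpace ℝ E]
    (a : ℝ) (Q : Set E) (f : E → ℝ) : Prop :=
  0 < a ∧ IsOpen Q ∧ Convex ℝ Q ∧ Q.Nonempty ∧ ContDiffOn ℝ 3 f Q ∧ ConvexOn ℝ Q f ∧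
  (∀ (x : ℕ → E) (z : E), (∀ i, x i ∈ Q) → z ∈ frontier Q →
      Tendsto x atTop (nhds z) → Tendsto (fun i => f (x i)) atTop atTop) ∧
  (∀ x ∈ Q, ∀ h : E, |iteratedFDeriv ℝ 3 f x ![h, h, h]| ≤
      2 * a ^ (-(1:ℝ)/2) * (iteratedFDeriv ℝ 2 f x ![h, h]) ^ ((3:ℝ)/2))

/-- `f` is a `ϑ`-self-concordant barrier with (open convex) domain `Q`. -/
def IsSCBarrier {E : Type*} [NormedAddCommGroup E] [NormedSpace ℝ E]
    (ϑ : ℝ) (Q : Set E) (f : E → ℝ) : Prop :=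
  IsSelfConcordant 1 Q f ∧ 1 ≤ ϑ ∧
  ∀ x ∈ Q, ∀ h : E, |fderiv ℝ f x h| ≤
      ϑ ^ ((1:ℝ)/2) * (iteratedFDeriv ℝ 2 f x ![h, h]) ^ ((1:ℝ)/2)

/-- Legendre–Fenchel conjugate of `f` (with essential domain `Q`). -/
def LFconj {m : ℕ} (Q : Set (Fin m → ℝ)) (f : (Fin m → ℝ) → ℝ) (y : Fin m → ℝ) : ℝ :=
  sSup ((fun x => y ⬝ᵥ x - f x) '' Q)

/-- Recession cone of `D`. -/
def recCone {m : ℕ} (D : Set (Fin m → ℝ)) : Set (Fin m → ℝ) :=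
  {h | ∀ z ∈ D, ∀ t : ℝ, 0 ≤ t → z + t • h ∈ D}

/-- `D_* = {y : ⟨y,h⟩ ≤ 0 for all h in the recession cone of D}`. -/
def dualSet {m : ℕ} (D : Set (Fin m → ℝ)) : Set (Fin m → ℝ) :=
  {y | ∀ h ∈ recCone D, y ⬝ᵥ h ≤ 0}

/-- Support function `δ_*(y|D)`, with values in `EReal`. -/
def suppF {m : ℕ} (D : Set (Fin m → ℝ)) (y : Fin m → ℝ) : EReal :=
  ⨆ z ∈ D, ((y ⬝ᵥ z : ℝ) : EReal)

/-- `ρ(t) = t - ln(1+t)` for `t > -1`, `+∞` otherwise. -/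
def rho (t : ℝ) : EReal :=
  if -1 < t then ((t - Real.log (1 + t) : ℝ) : EReal) else ⊤

/-- `‖v‖_B = ⟨Bv,v⟩^{1/2}`. -/
def Bnorm {ι : Type*} [Fintype ι] (B : Matrix ι ι ℝ) (v : ι → ℝ) : ℝ :=
  Real.sqrt (B.mulVec v ⬝ᵥ v)

/-- Loewner order `A ⪯ B`. -/
def loewnerLE {ι : Type*} [Fintype ι] (A B : Matrix ι ι ℝ) : Prop := (B - A).PosSemidef

/-- `u = Ax + (1/τ) z⁰`. -/
def uOf {m n : ℕ} (A : Matrix (Fin m) (Fin n) ℝ) (z0 : Fin m → ℝ)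
    (x : Fin n → ℝ) (τ : ℝ) : Fin m → ℝ := A.mulVec x + τ⁻¹ • z0

/-- Membership in `Q_DD`. -/
def InQDD {m n : ℕ} (A : Matrix (Fin m) (Fin n) ℝ) (c : Fin n → ℝ)
    (Dom : Set (Fin m → ℝ)) (z0 y0 : Fin m → ℝ)
    (x : Fin n → ℝ) (τ : ℝ) (y : Fin m → ℝ) : Prop :=
  uOf A z0 x τ ∈ Dom ∧ 0 < τ ∧
  Aᵀ.mulVec y - Aᵀ.mulVec y0 = -((τ - 1) • c) ∧
  y ∈ interior (dualSet (closure Dom))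

/-- `μ(x,τ,y)`. -/
def muOf {m n : ℕ} (A : Matrix (Fin m) (Fin n) ℝ) (c : Fin n → ℝ)
    (ξ ϑ : ℝ) (z0 : Fin m → ℝ) (yτ0 : ℝ)
    (x : Fin n → ℝ) (τ : ℝ) (y : Fin m → ℝ) : ℝ :=
  (τ / (ξ * ϑ)) * (-yτ0 - τ * (c ⬝ᵥ x) - y ⬝ᵥ uOf A z0 x τ)

/-- Proximity measure `Ω_μ(x,τ,y)`. -/
def OmegaOf {m n : ℕ} (A : Matrix (Fin m) (Fin n) ℝ) (Dom : Set (Fin m → ℝ))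
    (Φ : (Fin m → ℝ) → ℝ) (z0 : Fin m → ℝ) (μ : ℝ)
    (x : Fin n → ℝ) (τ : ℝ) (y : Fin m → ℝ) : ℝ :=
  Φ (uOf A z0 x τ) + LFconj Dom Φ ((τ / μ) • y) - (τ / μ) * (y ⬝ᵥ uOf A z0 x τ)

/-- The central-path system `(CP_μ)`. -/
def CP {m n : ℕ} (A : Matrix (Fin m) (Fin n) ℝ) (c : Fin n → ℝ)
    (Dom : Set (Fin m → ℝ)) (Φ : (Fin m → ℝ) → ℝ) (ξ ϑ : ℝ)
    (z0 y0 : Fin m → ℝ) (yτ0 μ : ℝ)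
    (x : Fin n → ℝ) (τ : ℝ) (y : Fin m → ℝ) : Prop :=
  InQDD A c Dom z0 y0 x τ y ∧
  y = (μ / τ) • vgrad Φ (uOf A z0 x τ) ∧
  c ⬝ᵥ x + τ⁻¹ * (y ⬝ᵥ uOf A z0 x τ) = -(ξ * ϑ * μ) / τ ^ 2 - yτ0 / τ

/-- The `(m+1)×(m+1)` matrix `H̄` as a function of `u` and `τ`. -/
def HbarU {m : ℕ} (Φ : (Fin m → ℝ) → ℝ) (ξ ϑ : ℝ) (u : Fin m → ℝ) (τ : ℝ) :
    Matrix (Fin m ⊕ Unit) (Fin m ⊕ Unit) ℝ :=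
  Matrix.of fun i j =>
    match i, j with
    | Sum.inl i, Sum.inl j => (1 / τ ^ 2) * vhess Φ u i j
    | Sum.inl i, Sum.inr _ =>
        (-((1 / τ ^ 2) • (vhess Φ u).mulVec u) - (1 / τ ^ 2) • vgrad Φ u) i
    | Sum.inr _, Sum.inl j =>
        (-((1 / τ ^ 2) • (vhess Φ u).mulVec u) - (1 / τ ^ 2) • vgrad Φ u) j
    | Sum.inr _, Sum.inr _ =>
        (2 / τ ^ 2) * (vgrad Φ u ⬝ᵥ u) + (1 / τ ^ 2) * (u ⬝ᵥ (vhess Φ u).mulVec u)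
          + ξ * ϑ / τ ^ 2

/-- `H̄(x,τ)` with `u = Ax + (1/τ)z⁰`. -/
def HbarX {m n : ℕ} (A : Matrix (Fin m) (Fin n) ℝ) (Φ : (Fin m → ℝ) → ℝ)
    (ξ ϑ : ℝ) (z0 : Fin m → ℝ) (x : Fin n → ℝ) (τ : ℝ) :
    Matrix (Fin m ⊕ Unit) (Fin m ⊕ Unit) ℝ :=
  HbarU Φ ξ ϑ (uOf A z0 x τ) τ

/-- `𝓗(H1, H2) = blockdiag(H1, H2⁻¹)`. -/
def calH {ι : Type*} [Fintype ι] [DecidableEq ι] (H1 H2 : Matrix ι ι ℝ) :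
    Matrix (ι ⊕ ι) (ι ⊕ ι) ℝ :=
  Matrix.fromBlocks H1 0 0 H2⁻¹

/-- The rows of `B` form a basis of the kernel of `v ↦ M v`. -/
def rowsBasisOfKernel {σ ι κ : Type*} [Fintype σ] [Fintype ι] [Fintype κ]
    (B : Matrix σ ι ℝ) (M : Matrix κ ι ℝ) : Prop :=
  LinearIndependent ℝ (fun s => B s) ∧
  Submodule.span ℝ (Set.range fun s => B s) = LinearMap.ker M.mulVecLin

/-- The `(2m+2)×(m+1)` matrix `U` with block rows `[A,0,0], [0,1,0], [0,-c_A,-Fᵀ], [cᵀ,0,0]`. -/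
def matU {m n p : ℕ} (A : Matrix (Fin m) (Fin n) ℝ) (c : Fin n → ℝ)
    (cA : Fin m → ℝ) (F : Matrix (Fin p) (Fin m) ℝ) :
    Matrix ((Fin m ⊕ Unit) ⊕ (Fin m ⊕ Unit)) (Fin n ⊕ (Unit ⊕ Fin p)) ℝ :=
  Matrix.of fun i j =>
    match i, j with
    | Sum.inl (Sum.inl i), Sum.inl j => A i j
    | Sum.inl (Sum.inl _), Sum.inr _ => 0
    | Sum.inl (Sum.inr _), Sum.inr (Sum.inl _) => 1
    | Sum.inl (Sum.inr _), _ => 0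
    | Sum.inr (Sum.inl _), Sum.inl _ => 0
    | Sum.inr (Sum.inl i), Sum.inr (Sum.inl _) => -cA i
    | Sum.inr (Sum.inl i), Sum.inr (Sum.inr k) => -F k i
    | Sum.inr (Sum.inr _), Sum.inl j => c j
    | Sum.inr (Sum.inr _), Sum.inr _ => 0

/-- The vector `r⁰`. -/
def r0vec {m n p : ℕ} (A : Matrix (Fin m) (Fin n) ℝ) (c : Fin n → ℝ)
    (cA : Fin m → ℝ) (F : Matrix (Fin p) (Fin m) ℝ)
    (y0 z0 : Fin m → ℝ) (yτ0 : ℝ) : Fin n ⊕ (Unit ⊕ Fin p) → ℝ :=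
  Sum.elim (fun j => -(Aᵀ.mulVec y0) j - c j)
    (Sum.elim (fun _ => -yτ0 + cA ⬝ᵥ z0) (fun k => F.mulVec z0 k))

/-- The vector `ψ^p`. -/
def psiP {m : ℕ} (Φ : (Fin m → ℝ) → ℝ) (ξ ϑ : ℝ) (u : Fin m → ℝ) (τ μ : ℝ) :
    (Fin m ⊕ Unit) ⊕ (Fin m ⊕ Unit) → ℝ :=
  Sum.elim
    (Sum.elim (fun i => (1 / τ) * vgrad Φ u i)
      (fun _ => -(1 / τ) * (vgrad Φ u ⬝ᵥ u) - ξ * ϑ / τ))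
    (Sum.elim (fun i => (τ / μ) * u i) (fun _ => τ / μ))

/-- The vector `ψ^c`; here `Φs` is the LF conjugate of `Φ` and `s = y_{τ,0} + τ⟨c,x⟩`. -/
def psiC {m : ℕ} (Φ Φs : (Fin m → ℝ) → ℝ) (u y : Fin m → ℝ) (τ μ s : ℝ) :
    (Fin m ⊕ Unit) ⊕ (Fin m ⊕ Unit) → ℝ :=
  Sum.elim
    (Sum.elim (fun i => (1 / τ) * vgrad Φ u i)
      (fun _ => -(1 / τ) * (vgrad Φ u ⬝ᵥ u) + (1 / μ) * (y ⬝ᵥ vgrad Φs ((τ / μ) • y))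
        + (1 / μ) * s))
    (Sum.elim (fun i => (τ / μ) * vgrad Φs ((τ / μ) • y) i) (fun _ => τ / μ))

end


noncomputable section
namespace SCAux
open Matrix Set

variable {m : ℕ} {f : (Fin m → ℝ) → ℝ} {Q : Set (Fin m → ℝ)} {a : ℝ}

lemma vec_eq_sum (h : Fin m → ℝ) : h = ∑ i, h i • (Pi.single i 1 : Fin m → ℝ) := by
  funext j
  simp [Pi.single_apply, Finset.sum_ite_eq]

lemma fderiv_dot (z h : Fin m → ℝ) : fderiv ℝ f z h = vgrad f z ⬝ᵥ h := by
  conv_lhs => rw [vec_eq_sum h]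
  rw [map_sum]
  simp [vgrad, dotProduct, mul_comm]

lemma update0 (u v w : Fin m → ℝ) : Function.update ![u, v] 0 w = ![w, v] := by
  funext i
  fin_cases i <;> simp [Function.update]

lemma update1 (u v w : Fin m → ℝ) : Function.update ![u, v] 1 w = ![u, w] := by
  funext i
  fin_cases i <;> simp [Function.update]

lemma hess_apply (f : (Fin m → ℝ) → ℝ) (z h h' : Fin m → ℝ) :
    iteratedFDeriv ℝ 2 f z ![h, h'] = (vhess f z) *ᵥ h' ⬝ᵥ h := by
  set M := iteratedFDeriv ℝ 2 f z with hM
  have expandL : ∀ v : Fin m → ℝ, M ![h, v] = ∑ i, h i * M ![Pi.single i 1, v] := by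
    intro v
    have h1 : (![h, v] : Fin 2 → Fin m → ℝ) = Function.update ![h, v] 0 (∑ i, h i • (Pi.single i 1 : Fin m → ℝ)) := by
      rw [update0, ← vec_eq_sum]
    calc M ![h, v] = M.toMultilinearMap (Function.update ![h, v] 0
            (∑ i, h i • (Pi.single i 1 : Fin m → ℝ))) := by
            rw [ContinuousMultilinearMap.coe_coe, ← h1]
      _ = ∑ i, M.toMultilinearMap (Function.update ![h, v] 0 (h i • (Pi.single i 1 : Fin m → ℝ))) :=
            M.toMultilinearMap.map_update_sum Finset.univ 0 _ ![h, v]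
      _ = ∑ i, h i * M ![Pi.single i 1, v] := by
            refine Finset.sum_congr rfl fun i _ => ?_
            rw [MultilinearMap.map_update_smul, update0, ContinuousMultilinearMap.coe_coe,
              smul_eq_mul]
  have expandR : ∀ u : Fin m → ℝ, M ![u, h'] = ∑ j, h' j * M ![u, Pi.single j 1] := by
    intro u
    have h1 : (![u, h'] : Fin 2 → Fin m → ℝ) = Function.update ![u, h'] 1 (∑ j, h' j • (Pi.single j 1 : Fin m → ℝ)) := by
      rw [update1, ← vec_eq_sum]
    calc M ![u, h'] = M.toMultilinearMap (Function.update ![u, h'] 1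
            (∑ j, h' j • (Pi.single j 1 : Fin m → ℝ))) := by
            rw [ContinuousMultilinearMap.coe_coe, ← h1]
      _ = ∑ j, M.toMultilinearMap (Function.update ![u, h'] 1 (h' j • (Pi.single j 1 : Fin m → ℝ))) :=
            M.toMultilinearMap.map_update_sum Finset.univ 1 _ ![u, h']
      _ = ∑ j, h' j * M ![u, Pi.single j 1] := by
            refine Finset.sum_congr rfl fun j _ => ?_
            rw [MultilinearMap.map_update_smul, update1, ContinuousMultilinearMap.coe_coe,
              smul_eq_mul]
  rw [expandL]
  have expR : ∀ i, M ![Pi.single i 1, h'] = ∑ j, h' j * M ![Pi.single i 1, Pi.single j 1] :=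
    fun i => expandR _
  simp_rw [expR]
  simp only [vhess, dotProduct, mulVec, dotProduct, Matrix.of_apply]
  refine Finset.sum_congr rfl fun i _ => ?_
  rw [Finset.mul_sum, Finset.sum_mul]
  refine Finset.sum_congr rfl fun j _ => ?_
  ring

lemma diffAt_iter (hC : ContDiffOn ℝ 3 f Q) (hQ : IsOpen Q) {k : ℕ} (hk : k < 3)
    {z : Fin m → ℝ} (hz : z ∈ Q) : DifferentiableAt ℝ (iteratedFDeriv ℝ k f) z := by
  have h1 : DifferentiableOn ℝ (iteratedFDerivWithin ℝ k f Q) Q :=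
    hC.differentiableOn_iteratedFDerivWithin (by exact_mod_cast hk) hQ.uniqueDiffOn
  have h2 : DifferentiableAt ℝ (iteratedFDerivWithin ℝ k f Q) z :=
    (h1 z hz).differentiableAt (hQ.mem_nhds hz)
  exact h2.congr_of_eventuallyEq
    ((hQ.eventually_mem hz).mono fun w hw => (iteratedFDerivWithin_of_isOpen k hQ hw).symm)

lemma hasDerivAt_seg (hC : ContDiffOn ℝ 3 f Q) (hQ : IsOpen Q) {k : ℕ} (hk : k < 3)
    (x h : Fin m → ℝ) {t : ℝ} (ht : x + t • h ∈ Q) :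
    HasDerivAt (fun s : ℝ => iteratedFDeriv ℝ k f (x + s • h) (fun _ => h))
      (iteratedFDeriv ℝ (k+1) f (x + t • h) (fun _ => h)) t := by
  set z := x + t • h with hz
  have hd : DifferentiableAt ℝ (iteratedFDeriv ℝ k f) z := diffAt_iter hC hQ hk ht
  have hline : HasDerivAt (fun s : ℝ => x + s • h) h t := by
    simpa using ((hasDerivAt_id t).smul_const h).const_add x
  have h1 : HasDerivAt (fun s : ℝ => iteratedFDeriv ℝ k f (x + s • h))
      (fderiv ℝ (iteratedFDeriv ℝ k f) z h) t := hd.hasFDerivAt.comp_hasDerivAt t hline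
  have h2 := ((ContinuousMultilinearMap.apply ℝ (fun _ : Fin k => (Fin m → ℝ)) ℝ
      (fun _ => h)).hasFDerivAt.comp_hasDerivAt t h1)
  rw [iteratedFDeriv_succ_apply_left]; exact h2

lemma const2 (h : Fin m → ℝ) : (fun _ : Fin 2 => h) = ![h, h] := by
  funext i; fin_cases i <;> rfl

lemma const3 (h : Fin m → ℝ) : (fun _ : Fin 3 => h) = ![h, h, h] := by
  funext i; fin_cases i <;> rfl

lemma rpow_half (ha : 0 < a) : a ^ (-(1:ℝ)/2) = (Real.sqrt a)⁻¹ := by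
  rw [show (-(1:ℝ)/2) = -(1/2) by ring, Real.rpow_neg ha.le, Real.sqrt_eq_rpow]

lemma rpow_32 {q : ℝ} (hq : 0 < q) : q ^ ((3:ℝ)/2) = q * Real.sqrt q := by
  rw [show ((3:ℝ)/2) = 1 + 1/2 by ring, Real.rpow_add hq, Real.rpow_one, Real.sqrt_eq_rpow]

lemma psi_pos (hnd : ∀ z ∈ Q, (vhess f z).PosDef) {z : Fin m → ℝ} (hz : z ∈ Q)
    {h : Fin m → ℝ} (hne : h ≠ 0) : 0 < iteratedFDeriv ℝ 2 f z (fun _ => h) := by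
  rw [const2, hess_apply]
  have h2 := (hnd z hz).dotProduct_mulVec_pos hne
  rwa [star_trivial, dotProduct_comm] at h2

lemma u_lip (ha : 0 < a) (hQ : IsOpen Q) (hC : ContDiffOn ℝ 3 f Q)
    (hSC : ∀ z ∈ Q, ∀ h : Fin m → ℝ, |iteratedFDeriv ℝ 3 f z ![h,h,h]| ≤
      2 * a ^ (-(1:ℝ)/2) * (iteratedFDeriv ℝ 2 f z ![h,h]) ^ ((3:ℝ)/2))
    (hnd : ∀ z ∈ Q, (vhess f z).PosDef)
    (x h : Fin m → ℝ) (hne : h ≠ 0) (T : ℝ)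
    (hseg : ∀ s ∈ Icc (0:ℝ) T, x + s • h ∈ Q) :
    ∀ t ∈ Icc (0:ℝ) T,
      |(Real.sqrt (iteratedFDeriv ℝ 2 f (x + t • h) (fun _ => h)))⁻¹
        - (Real.sqrt (iteratedFDeriv ℝ 2 f (x + (0:ℝ) • h) (fun _ => h)))⁻¹|
        ≤ (Real.sqrt a)⁻¹ * t := by
  set ψ : ℝ → ℝ := fun s => iteratedFDeriv ℝ 2 f (x + s • h) (fun _ => h) with hψdef
  set ψ3 : ℝ → ℝ := fun s => iteratedFDeriv ℝ 3 f (x + s • h) (fun _ => h) with hψ3def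
  have hψpos : ∀ t ∈ Icc (0:ℝ) T, 0 < ψ t := fun t ht => psi_pos hnd (hseg t ht) hne
  have hψ' : ∀ t ∈ Icc (0:ℝ) T, HasDerivAt ψ (ψ3 t) t := fun t ht =>
    hasDerivAt_seg hC hQ (by norm_num) x h (hseg t ht)
  set u : ℝ → ℝ := fun s => (Real.sqrt (ψ s))⁻¹ with hudef
  set u' : ℝ → ℝ := fun s => -(ψ3 s / (2 * Real.sqrt (ψ s))) / (Real.sqrt (ψ s))^2 with hu'def
  have hu : ∀ t ∈ Icc (0:ℝ) T, HasDerivAt u (u' t) t := fun t ht =>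
    ((hψ' t ht).sqrt (hψpos t ht).ne').inv (Real.sqrt_ne_zero'.2 (hψpos t ht))
  have hbound : ∀ t ∈ Icc (0:ℝ) T, ‖u' t‖ ≤ (Real.sqrt a)⁻¹ := by
    intro t ht
    have hp := hψpos t ht
    have hsq : (Real.sqrt (ψ t))^2 = ψ t := Real.sq_sqrt hp.le
    have hsp : 0 < Real.sqrt (ψ t) := Real.sqrt_pos.2 hp
    have hsa : 0 < Real.sqrt a := Real.sqrt_pos.2 ha
    have h3 := hSC (x + t • h) (hseg t ht) h
    rw [← const3, ← const2, rpow_half ha, rpow_32 hp] at h3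
    have e1 : u' t = -(ψ3 t) / (2 * Real.sqrt (ψ t) * ψ t) := by
      rw [hu'def]
      field_simp
      rw [hsq]
    rw [Real.norm_eq_abs, e1, abs_div, abs_neg,
      abs_of_pos (show (0:ℝ) < 2 * Real.sqrt (ψ t) * ψ t by positivity)]
    rw [div_le_iff₀ (by positivity)]
    calc |ψ3 t| ≤ 2 * (Real.sqrt a)⁻¹ * (ψ t * Real.sqrt (ψ t)) := h3
      _ = (Real.sqrt a)⁻¹ * (2 * Real.sqrt (ψ t) * ψ t) := by ring
  intro t ht
  have key := Convex.norm_image_sub_le_of_norm_hasDerivWithin_le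
    (fun s hs => (hu s hs).hasDerivWithinAt) hbound (convex_Icc (0:ℝ) T)
    (left_mem_Icc.2 (ht.1.trans ht.2)) ht
  rw [Real.norm_eq_abs, Real.norm_eq_abs, sub_zero, abs_of_nonneg ht.1] at key
  simpa only [hudef, hψdef] using key


lemma mono_aux {T : ℝ} (hT : 0 ≤ T) {F F' : ℝ → ℝ}
    (hF : ∀ t ∈ Icc (0:ℝ) T, HasDerivAt F (F' t) t)
    (hd : ∀ t ∈ Ioo (0:ℝ) T, 0 ≤ F' t) : F 0 ≤ F T := by
  have h1 : MonotoneOn F (Icc (0:ℝ) T) := by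
    apply monotoneOn_of_deriv_nonneg (convex_Icc 0 T)
    · exact fun t ht => (hF t ht).continuousAt.continuousWithinAt
    · rw [interior_Icc]
      exact fun t ht => ((hF t (Ioo_subset_Icc_self ht)).differentiableAt).differentiableWithinAt
    · rw [interior_Icc]
      intro t ht
      rw [(hF t (Ioo_subset_Icc_self ht)).deriv]
      exact hd t ht
  exact h1 (left_mem_Icc.2 hT) (right_mem_Icc.2 hT) hT

def cOf {m : ℕ} (f : (Fin m → ℝ) → ℝ) (a : ℝ) (x h : Fin m → ℝ) : ℝ :=
  Real.sqrt (iteratedFDeriv ℝ 2 f (x + (0:ℝ) • h) (fun _ => h)) / Real.sqrt a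

lemma cOf_pos (ha : 0 < a) (hnd : ∀ z ∈ Q, (vhess f z).PosDef)
    {x h : Fin m → ℝ} (hx : x + (0:ℝ) • h ∈ Q) (hne : h ≠ 0) : 0 < cOf f a x h :=
  div_pos (Real.sqrt_pos.2 (psi_pos hnd hx hne)) (Real.sqrt_pos.2 ha)

lemma psi_lower (ha : 0 < a) (hQ : IsOpen Q) (hC : ContDiffOn ℝ 3 f Q)
    (hSC : ∀ z ∈ Q, ∀ h : Fin m → ℝ, |iteratedFDeriv ℝ 3 f z ![h,h,h]| ≤
      2 * a ^ (-(1:ℝ)/2) * (iteratedFDeriv ℝ 2 f z ![h,h]) ^ ((3:ℝ)/2))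
    (hnd : ∀ z ∈ Q, (vhess f z).PosDef)
    (x h : Fin m → ℝ) (hne : h ≠ 0) (T : ℝ)
    (hseg : ∀ s ∈ Icc (0:ℝ) T, x + s • h ∈ Q) :
    ∀ t ∈ Icc (0:ℝ) T, a * (cOf f a x h)^2 / (1 + cOf f a x h * t)^2
      ≤ iteratedFDeriv ℝ 2 f (x + t • h) (fun _ => h) := by
  intro t ht
  have hT : (0:ℝ) ≤ T := ht.1.trans ht.2
  have h0T : (0:ℝ) ∈ Icc (0:ℝ) T := left_mem_Icc.2 hT
  set c := cOf f a x h with hcdef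
  set ψ : ℝ → ℝ := fun s => iteratedFDeriv ℝ 2 f (x + s • h) (fun _ => h) with hψdef
  have hψ0 : 0 < ψ 0 := psi_pos hnd (hseg 0 h0T) hne
  have hψt : 0 < ψ t := psi_pos hnd (hseg t ht) hne
  have hsa : 0 < Real.sqrt a := Real.sqrt_pos.2 ha
  have hc : 0 < c := cOf_pos ha hnd (hseg 0 h0T) hne
  have hct : 0 < 1 + c * t := by nlinarith [mul_nonneg hc.le ht.1]
  have lip := u_lip ha hQ hC hSC hnd x h hne T hseg t ht
  have h1 : (Real.sqrt (ψ t))⁻¹ ≤ (1 + c * t) / (c * Real.sqrt a) := by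
    have h2 := (abs_le.1 lip).2
    have hca : c * Real.sqrt a = Real.sqrt (ψ 0) := by
      rw [hcdef, cOf]; exact div_mul_cancel₀ _ hsa.ne'
    have hA : (Real.sqrt (ψ 0))⁻¹ + (Real.sqrt a)⁻¹ * t = (1 + c * t) / (c * Real.sqrt a) := by
      rw [← hca]
      field_simp
    rw [← hA]
    simp only [hψdef] at h2 ⊢
    linarith
  have h2 : (c * Real.sqrt a) / (1 + c * t) ≤ Real.sqrt (ψ t) := by
    have h3 := inv_anti₀ (inv_pos.2 (Real.sqrt_pos.2 hψt)) h1
    rwa [inv_inv, inv_div] at h3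
  calc a * c^2 / (1 + c*t)^2 = ((c * Real.sqrt a) / (1 + c*t))^2 := by
        rw [div_pow, mul_pow, Real.sq_sqrt ha.le]; ring
    _ ≤ (Real.sqrt (ψ t))^2 := by
        apply pow_le_pow_left₀ (by positivity) h2
    _ = ψ t := Real.sq_sqrt hψt.le

lemma psi_upper (ha : 0 < a) (hQ : IsOpen Q) (hC : ContDiffOn ℝ 3 f Q)
    (hSC : ∀ z ∈ Q, ∀ h : Fin m → ℝ, |iteratedFDeriv ℝ 3 f z ![h,h,h]| ≤
      2 * a ^ (-(1:ℝ)/2) * (iteratedFDeriv ℝ 2 f z ![h,h]) ^ ((3:ℝ)/2))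
    (hnd : ∀ z ∈ Q, (vhess f z).PosDef)
    (x h : Fin m → ℝ) (hne : h ≠ 0) (T : ℝ)
    (hseg : ∀ s ∈ Icc (0:ℝ) T, x + s • h ∈ Q)
    (hcT : cOf f a x h * T < 1) :
    ∀ t ∈ Icc (0:ℝ) T, iteratedFDeriv ℝ 2 f (x + t • h) (fun _ => h)
      ≤ a * (cOf f a x h)^2 / (1 - cOf f a x h * t)^2 := by
  intro t ht
  have hT : (0:ℝ) ≤ T := ht.1.trans ht.2
  have h0T : (0:ℝ) ∈ Icc (0:ℝ) T := left_mem_Icc.2 hT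
  set c := cOf f a x h with hcdef
  set ψ : ℝ → ℝ := fun s => iteratedFDeriv ℝ 2 f (x + s • h) (fun _ => h) with hψdef
  have hψ0 : 0 < ψ 0 := psi_pos hnd (hseg 0 h0T) hne
  have hψt : 0 < ψ t := psi_pos hnd (hseg t ht) hne
  have hsa : 0 < Real.sqrt a := Real.sqrt_pos.2 ha
  have hc : 0 < c := cOf_pos ha hnd (hseg 0 h0T) hne
  have hct : 0 < 1 - c * t := by nlinarith [mul_le_mul_of_nonneg_left ht.2 hc.le]
  have lip := u_lip ha hQ hC hSC hnd x h hne T hseg t ht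
  have h1 : (1 - c * t) / (c * Real.sqrt a) ≤ (Real.sqrt (ψ t))⁻¹ := by
    have h2 := (abs_le.1 lip).1
    have hca : c * Real.sqrt a = Real.sqrt (ψ 0) := by
      rw [hcdef, cOf]; exact div_mul_cancel₀ _ hsa.ne'
    have hA : (Real.sqrt (ψ 0))⁻¹ - (Real.sqrt a)⁻¹ * t = (1 - c * t) / (c * Real.sqrt a) := by
      rw [← hca]
      field_simp
    rw [← hA]
    simp only [hψdef] at h2 ⊢
    linarith
  have h2 : Real.sqrt (ψ t) ≤ (c * Real.sqrt a) / (1 - c * t) := by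
    have h3 := inv_anti₀ (by positivity) h1
    rwa [inv_inv, inv_div] at h3
  calc ψ t = (Real.sqrt (ψ t))^2 := (Real.sq_sqrt hψt.le).symm
    _ ≤ ((c * Real.sqrt a) / (1 - c*t))^2 := by
        apply pow_le_pow_left₀ (Real.sqrt_nonneg _) h2
    _ = a * c^2 / (1 - c*t)^2 := by
        rw [div_pow, mul_pow, Real.sq_sqrt ha.le]; ring


lemma seg_lower (ha : 0 < a) (hQ : IsOpen Q) (hC : ContDiffOn ℝ 3 f Q)
    (hSC : ∀ z ∈ Q, ∀ h : Fin m → ℝ, |iteratedFDeriv ℝ 3 f z ![h,h,h]| ≤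
      2 * a ^ (-(1:ℝ)/2) * (iteratedFDeriv ℝ 2 f z ![h,h]) ^ ((3:ℝ)/2))
    (hnd : ∀ z ∈ Q, (vhess f z).PosDef)
    (x h : Fin m → ℝ) (hne : h ≠ 0) (T : ℝ) (hT : 0 ≤ T)
    (hseg : ∀ s ∈ Icc (0:ℝ) T, x + s • h ∈ Q) :
    f x + T * fderiv ℝ f x h + a * (cOf f a x h * T - Real.log (1 + cOf f a x h * T))
      ≤ f (x + T • h) := by
  set c := cOf f a x h with hcdef
  have h0T : (0:ℝ) ∈ Icc (0:ℝ) T := left_mem_Icc.2 hT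
  have hc : 0 < c := cOf_pos ha hnd (hseg 0 h0T) hne
  have hpos : ∀ s : ℝ, 0 ≤ s → 0 < 1 + c * s := fun s hs => by nlinarith [mul_nonneg hc.le hs]
  set φ1 : ℝ → ℝ := fun s => iteratedFDeriv ℝ 1 f (x + s • h) (fun _ => h) with hφ1
  set ψ : ℝ → ℝ := fun s => iteratedFDeriv ℝ 2 f (x + s • h) (fun _ => h) with hψ
  have hmodel1 : ∀ s : ℝ, 0 ≤ s → HasDerivAt (fun σ => φ1 0 + a * (c - c * (1 + c * σ)⁻¹))
      (a * c^2 / (1 + c * s)^2) s := by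
    intro s hs
    have hinner : HasDerivAt (fun σ : ℝ => 1 + c * σ) c s := by
      simpa using ((hasDerivAt_id s).const_mul c).const_add 1
    have hinv : HasDerivAt (fun σ : ℝ => (1 + c * σ)⁻¹) (-c / (1 + c * s)^2) s :=
      hinner.inv (hpos s hs).ne'
    have hh := (((hinv.const_mul c).const_sub c).const_mul a).const_add (φ1 0)
    refine hh.congr_deriv ?_
    ring
  have claim1 : ∀ t ∈ Icc (0:ℝ) T, φ1 0 + a * (c - c * (1 + c * t)⁻¹) ≤ φ1 t := by
    intro t ht
    have hsub : Icc (0:ℝ) t ⊆ Icc 0 T := Icc_subset_Icc le_rfl ht.2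
    have key := mono_aux ht.1 (F := fun σ => φ1 σ - (φ1 0 + a * (c - c * (1 + c*σ)⁻¹)))
      (F' := fun σ => ψ σ - a * c^2 / (1 + c*σ)^2)
      (fun s hs => ((hasDerivAt_seg hC hQ (by norm_num) x h (hseg s (hsub hs))).sub
        (hmodel1 s hs.1)))
      (fun s hs => by
        have hb := psi_lower ha hQ hC hSC hnd x h hne T hseg s (hsub (Ioo_subset_Icc_self hs))
        simp only [hψ]
        linarith)
    simp only [mul_zero, add_zero, inv_one, mul_one, sub_self, mul_zero, mul_zero] at key
    linarith
  have hφ0eq : (fun s : ℝ => iteratedFDeriv ℝ 0 f (x + s • h) (fun _ => h))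
      = fun s : ℝ => f (x + s • h) := by
    funext s; exact iteratedFDeriv_zero_apply _
  have hder0 : ∀ s ∈ Icc (0:ℝ) T, HasDerivAt (fun σ : ℝ => f (x + σ • h)) (φ1 s) s := by
    intro s hs
    have hh := hasDerivAt_seg (k := 0) hC hQ (by norm_num) x h (hseg s hs)
    rwa [hφ0eq] at hh
  have hmodel2 : ∀ s : ℝ, 0 ≤ s →
      HasDerivAt (fun σ => f x + σ * φ1 0 + a * (c*σ - Real.log (1 + c*σ)))
      (φ1 0 + a * (c - c * (1 + c * s)⁻¹)) s := by
    intro s hs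
    have hinner : HasDerivAt (fun σ : ℝ => 1 + c * σ) c s := by
      simpa using ((hasDerivAt_id s).const_mul c).const_add 1
    have hlog : HasDerivAt (fun σ : ℝ => Real.log (1 + c*σ)) (c / (1 + c*s)) s :=
      hinner.log (hpos s hs).ne'
    have hlin : HasDerivAt (fun σ : ℝ => f x + σ * φ1 0) (φ1 0) s := by
      simpa using ((hasDerivAt_id s).mul_const (φ1 0)).const_add (f x)
    have hh := hlin.add ((((hasDerivAt_id s).const_mul c).sub hlog).const_mul a)
    refine hh.congr_deriv ?_
    ring
  have final := mono_aux hT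
    (F := fun σ => f (x+σ•h) - (f x + σ*φ1 0 + a*(c*σ - Real.log (1+c*σ))))
    (F' := fun σ => φ1 σ - (φ1 0 + a*(c - c*(1+c*σ)⁻¹)))
    (fun s hs => (hder0 s hs).sub (hmodel2 s hs.1))
    (fun s hs => sub_nonneg.2 (claim1 s (Ioo_subset_Icc_self hs)))
  have hφ10 : φ1 0 = fderiv ℝ f x h := by
    rw [hφ1]
    simp [iteratedFDeriv_one_apply]
  simp only [zero_smul, add_zero, zero_mul, mul_zero, Real.log_one, sub_zero, sub_self,
    add_zero] at final
  rw [← hφ10]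
  linarith

lemma seg_upper (ha : 0 < a) (hQ : IsOpen Q) (hC : ContDiffOn ℝ 3 f Q)
    (hSC : ∀ z ∈ Q, ∀ h : Fin m → ℝ, |iteratedFDeriv ℝ 3 f z ![h,h,h]| ≤
      2 * a ^ (-(1:ℝ)/2) * (iteratedFDeriv ℝ 2 f z ![h,h]) ^ ((3:ℝ)/2))
    (hnd : ∀ z ∈ Q, (vhess f z).PosDef)
    (x h : Fin m → ℝ) (hne : h ≠ 0) (T : ℝ) (hT : 0 ≤ T)
    (hseg : ∀ s ∈ Icc (0:ℝ) T, x + s • h ∈ Q)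
    (hcT : cOf f a x h * T < 1) :
    f (x + T • h) ≤ f x + T * fderiv ℝ f x h
      + a * (-(cOf f a x h * T) - Real.log (1 - cOf f a x h * T)) := by
  set c := cOf f a x h with hcdef
  have h0T : (0:ℝ) ∈ Icc (0:ℝ) T := left_mem_Icc.2 hT
  have hc : 0 < c := cOf_pos ha hnd (hseg 0 h0T) hne
  have hpos : ∀ s : ℝ, s ∈ Icc (0:ℝ) T → 0 < 1 - c * s := by
    intro s hs
    nlinarith [mul_le_mul_of_nonneg_left hs.2 hc.le]
  set φ1 : ℝ → ℝ := fun s => iteratedFDeriv ℝ 1 f (x + s • h) (fun _ => h) with hφ1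
  set ψ : ℝ → ℝ := fun s => iteratedFDeriv ℝ 2 f (x + s • h) (fun _ => h) with hψ
  have hmodel1 : ∀ s ∈ Icc (0:ℝ) T, HasDerivAt (fun σ => φ1 0 + a * (c * (1 - c * σ)⁻¹ - c))
      (a * c^2 / (1 - c * s)^2) s := by
    intro s hs
    have hinner : HasDerivAt (fun σ : ℝ => 1 - c * σ) (-c) s := by
      simpa using ((hasDerivAt_id s).const_mul c).const_sub 1
    have hinv : HasDerivAt (fun σ : ℝ => (1 - c * σ)⁻¹) (-(-c) / (1 - c * s)^2) s :=
      hinner.inv (hpos s hs).ne'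
    have hh := (((hinv.const_mul c).sub_const c).const_mul a).const_add (φ1 0)
    refine hh.congr_deriv ?_
    ring
  have claim1 : ∀ t ∈ Icc (0:ℝ) T, φ1 t ≤ φ1 0 + a * (c * (1 - c * t)⁻¹ - c) := by
    intro t ht
    have hsub : Icc (0:ℝ) t ⊆ Icc 0 T := Icc_subset_Icc le_rfl ht.2
    have key := mono_aux ht.1 (F := fun σ => (φ1 0 + a * (c * (1 - c*σ)⁻¹ - c)) - φ1 σ)
      (F' := fun σ => a * c^2 / (1 - c*σ)^2 - ψ σ)
      (fun s hs => ((hmodel1 s (hsub hs)).sub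
        (hasDerivAt_seg hC hQ (by norm_num) x h (hseg s (hsub hs)))))
      (fun s hs => by
        have hb := psi_upper ha hQ hC hSC hnd x h hne T hseg hcT s (hsub (Ioo_subset_Icc_self hs))
        simp only [hψ]
        linarith)
    simp only [mul_zero, sub_zero, inv_one, mul_one, sub_self, add_zero] at key
    linarith
  have hφ0eq : (fun s : ℝ => iteratedFDeriv ℝ 0 f (x + s • h) (fun _ => h))
      = fun s : ℝ => f (x + s • h) := by
    funext s; exact iteratedFDeriv_zero_apply _
  have hder0 : ∀ s ∈ Icc (0:ℝ) T, HasDerivAt (fun σ : ℝ => f (x + σ • h)) (φ1 s) s := by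
    intro s hs
    have hh := hasDerivAt_seg (k := 0) hC hQ (by norm_num) x h (hseg s hs)
    rwa [hφ0eq] at hh
  have hmodel2 : ∀ s ∈ Icc (0:ℝ) T,
      HasDerivAt (fun σ => f x + σ * φ1 0 + a * (-(c*σ) - Real.log (1 - c*σ)))
      (φ1 0 + a * (c * (1 - c * s)⁻¹ - c)) s := by
    intro s hs
    have hinner : HasDerivAt (fun σ : ℝ => 1 - c * σ) (-c) s := by
      simpa using ((hasDerivAt_id s).const_mul c).const_sub 1
    have hlog : HasDerivAt (fun σ : ℝ => Real.log (1 - c*σ)) (-c / (1 - c*s)) s :=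
      hinner.log (hpos s hs).ne'
    have hlin : HasDerivAt (fun σ : ℝ => f x + σ * φ1 0) (φ1 0) s := by
      simpa using ((hasDerivAt_id s).mul_const (φ1 0)).const_add (f x)
    have hneg : HasDerivAt (fun σ : ℝ => -(c*σ)) (-c) s := by
      exact (((hasDerivAt_id s).const_mul c)).neg.congr_deriv (by ring)
    have hh := hlin.add ((hneg.sub hlog).const_mul a)
    refine hh.congr_deriv ?_
    ring
  have final := mono_aux hT
    (F := fun σ => (f x + σ*φ1 0 + a*(-(c*σ) - Real.log (1-c*σ))) - f (x+σ•h))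
    (F' := fun σ => (φ1 0 + a*(c*(1-c*σ)⁻¹ - c)) - φ1 σ)
    (fun s hs => (hmodel2 s hs).sub (hder0 s hs))
    (fun s hs => sub_nonneg.2 (claim1 s (Ioo_subset_Icc_self hs)))
  have hφ10 : φ1 0 = fderiv ℝ f x h := by
    rw [hφ1]
    simp [iteratedFDeriv_one_apply]
  simp only [zero_smul, add_zero, zero_mul, mul_zero, neg_zero, Real.log_one, sub_zero, sub_self,
    add_zero] at final
  rw [← hφ10]
  linarith


lemma dikin (ha : 0 < a) (hQ : IsOpen Q) (hconv : Convex ℝ Q) (hC : ContDiffOn ℝ 3 f Q)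
    (hSC : ∀ z ∈ Q, ∀ h : Fin m → ℝ, |iteratedFDeriv ℝ 3 f z ![h,h,h]| ≤
      2 * a ^ (-(1:ℝ)/2) * (iteratedFDeriv ℝ 2 f z ![h,h]) ^ ((3:ℝ)/2))
    (hblow : ∀ (xs : ℕ → (Fin m → ℝ)) (z : Fin m → ℝ), (∀ i, xs i ∈ Q) → z ∈ frontier Q →
      Filter.Tendsto xs Filter.atTop (nhds z) →
      Filter.Tendsto (fun i => f (xs i)) Filter.atTop Filter.atTop)
    (hnd : ∀ z ∈ Q, (vhess f z).PosDef)
    (x : Fin m → ℝ) (hx : x ∈ Q) (h : Fin m → ℝ) (hne : h ≠ 0)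
    (t : ℝ) (ht0 : 0 ≤ t) (htc : cOf f a x h * t < 1) : x + t • h ∈ Q := by
  by_contra hcon
  set c := cOf f a x h with hcdef
  have hx0 : x + (0:ℝ) • h ∈ Q := by simpa using hx
  have hc : 0 < c := cOf_pos ha hnd hx0 hne
  set B : Set ℝ := {s : ℝ | x + s • h ∈ Q} with hBdef
  have hBopen : IsOpen B := by
    have hcont : Continuous (fun s : ℝ => x + s • h) :=
      continuous_const.add (continuous_id.smul continuous_const)
    exact hQ.preimage hcont
  have hBconv : Convex ℝ B := by
    have : B = (AffineMap.lineMap x (x + h) : ℝ →ᵃ[ℝ] (Fin m → ℝ)) ⁻¹' Q := by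
      ext s
      simp [hBdef, AffineMap.lineMap_apply, add_comm]
    rw [this]
    exact hconv.affine_preimage _
  have h0B : (0:ℝ) ∈ B := hx0
  have htB : t ∉ B := hcon
  set A : Set ℝ := B ∩ Icc 0 t with hAdef
  have hAne : A.Nonempty := ⟨0, h0B, left_mem_Icc.2 ht0⟩
  have hAbdd : BddAbove A := ⟨t, fun s hs => hs.2.2⟩
  set T := sSup A with hTdef
  have hT0 : 0 ≤ T := le_csSup hAbdd ⟨h0B, left_mem_Icc.2 ht0⟩
  have hTt : T ≤ t := csSup_le hAne fun s hs => hs.2.2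
  have key1 : ∀ s : ℝ, 0 ≤ s → s < T → s ∈ B := by
    intro s hs0 hsT
    obtain ⟨s', hs'A, hss'⟩ := exists_lt_of_lt_csSup hAne hsT
    exact hBconv.ordConnected.out h0B hs'A.1 ⟨hs0, hss'.le⟩
  have hTnotB : T ∉ B := by
    intro hTB
    have hTlt : T < t := lt_of_le_of_ne hTt fun he => htB (he ▸ hTB)
    obtain ⟨ε, hε, hball⟩ := Metric.isOpen_iff.1 hBopen T hTB
    set s := min t (T + ε/2) with hsdef
    have hsB : s ∈ B := by
      apply hball
      rw [Real.ball_eq_Ioo]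
      constructor
      · have : T - ε < T := by linarith
        exact lt_of_lt_of_le this (le_min hTlt.le (by linarith))
      · exact lt_of_le_of_lt (min_le_right _ _) (by linarith)
    have hsA : s ∈ A := ⟨hsB, ⟨le_min ht0 (by linarith), min_le_left _ _⟩⟩
    have : s ≤ T := le_csSup hAbdd hsA
    have : T < s := lt_min hTlt (by linarith)
    linarith
  have hTpos : 0 < T := hT0.lt_of_ne' fun he => hTnotB (he ▸ h0B)
  set sn : ℕ → ℝ := fun n => T - T / ((n:ℝ) + 2) with hsndef
  have hsn_mem : ∀ n, 0 ≤ sn n ∧ sn n < T := by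
    intro n
    have h2 : (0:ℝ) < (n:ℝ) + 2 := by positivity
    constructor
    · rw [hsndef]
      rw [sub_nonneg, div_le_iff₀ h2]
      nlinarith
    · have : 0 < T / ((n:ℝ) + 2) := div_pos hTpos h2
      simp only [hsndef]
      linarith
  have hsnB : ∀ n, x + sn n • h ∈ Q := fun n => key1 _ (hsn_mem n).1 (hsn_mem n).2
  have hsn_tendsto : Filter.Tendsto sn Filter.atTop (nhds T) := by
    have h1 : Filter.Tendsto (fun n : ℕ => ((n:ℝ) + 2)) Filter.atTop Filter.atTop :=
      Filter.tendsto_atTop_add_const_right _ 2 tendsto_natCast_atTop_atTop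
    have h2 : Filter.Tendsto (fun n : ℕ => T / ((n:ℝ) + 2)) Filter.atTop (nhds 0) :=
      Filter.Tendsto.div_atTop tendsto_const_nhds h1
    have h3 : Filter.Tendsto sn Filter.atTop (nhds (T - 0)) :=
      Filter.Tendsto.sub tendsto_const_nhds h2
    simpa using h3
  have hxn_tendsto : Filter.Tendsto (fun n => x + sn n • h) Filter.atTop (nhds (x + T • h)) :=
    (hsn_tendsto.smul_const h).const_add x
  have hfront : x + T • h ∈ frontier Q := by
    rw [frontier_eq_closure_inter_closure]
    constructor
    · exact mem_closure_of_tendsto hxn_tendsto (Filter.Eventually.of_forall hsnB)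
    · rw [mem_closure_iff]
      intro o ho hzo
      exact ⟨x + T • h, hzo, hTnotB⟩
  have hblow2 := hblow _ _ hsnB hfront hxn_tendsto
  have hbound : ∀ n, f (x + sn n • h) ≤
      f x + t * |fderiv ℝ f x h| + a * (- Real.log (1 - c * t)) := by
    intro n
    obtain ⟨hn0, hnT⟩ := hsn_mem n
    have hseg' : ∀ σ ∈ Icc (0:ℝ) (sn n), x + σ • h ∈ Q := fun σ hσ =>
      key1 σ hσ.1 (lt_of_le_of_lt hσ.2 hnT)
    have hcs : c * sn n < 1 := by nlinarith
    have := seg_upper ha hQ hC hSC hnd x h hne (sn n) hn0 hseg' hcs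
    have hb1 : sn n * fderiv ℝ f x h ≤ t * |fderiv ℝ f x h| := by
      calc sn n * fderiv ℝ f x h ≤ sn n * |fderiv ℝ f x h| :=
            mul_le_mul_of_nonneg_left (le_abs_self _) hn0
        _ ≤ t * |fderiv ℝ f x h| :=
            mul_le_mul_of_nonneg_right (by linarith) (abs_nonneg _)
    have hb2 : -(c * sn n) - Real.log (1 - c * sn n) ≤ - Real.log (1 - c * t) := by
      have hst : sn n ≤ t := by linarith
      have hpos1 : (0:ℝ) < 1 - c * t := by linarith
      have hpos2 : (0:ℝ) < 1 - c * sn n := by nlinarith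
      have hlog := Real.log_le_log hpos1 (by nlinarith : 1 - c * t ≤ 1 - c * sn n)
      have : 0 ≤ c * sn n := mul_nonneg hc.le hn0
      linarith
    have hb3 : a * (-(c * sn n) - Real.log (1 - c * sn n)) ≤ a * (- Real.log (1 - c * t)) :=
      mul_le_mul_of_nonneg_left hb2 ha.le
    linarith
  obtain ⟨n, hn⟩ := (hblow2.eventually
    (Filter.eventually_gt_atTop (f x + t * |fderiv ℝ f x h| + a * (- Real.log (1 - c * t))))).exists
  exact absurd (hbound n) (not_le.2 hn)


lemma hsym {H : Matrix (Fin m) (Fin m) ℝ} (hH : H.IsHermitian) (u w : Fin m → ℝ) :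
    H *ᵥ u ⬝ᵥ w = H *ᵥ w ⬝ᵥ u := by
  have hentry : ∀ i j, H i j = H j i := by
    intro i j
    conv_lhs => rw [← hH]
    simp [Matrix.conjTranspose_apply]
  simp only [Matrix.mulVec, dotProduct]
  have expand : ∀ u w : Fin m → ℝ,
      ∑ i, (∑ j, H i j * u j) * w i = ∑ i, ∑ j, H i j * u j * w i := fun u w =>
    Finset.sum_congr rfl fun i _ => Finset.sum_mul _ _ _
  rw [expand, expand, Finset.sum_comm]
  refine Finset.sum_congr rfl fun i _ => Finset.sum_congr rfl fun j _ => ?_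
  rw [hentry j i]
  ring

lemma cs {H : Matrix (Fin m) (Fin m) ℝ} (hH : H.PosDef) (δ w : Fin m → ℝ) :
    δ ⬝ᵥ w ≤ Real.sqrt (H⁻¹ *ᵥ δ ⬝ᵥ δ) * Real.sqrt (H *ᵥ w ⬝ᵥ w) := by
  set v := H⁻¹ *ᵥ δ with hv
  have hHv : H *ᵥ v = δ := by
    rw [hv, Matrix.mulVec_mulVec, Matrix.mul_nonsing_inv _ (isUnit_iff_ne_zero.2 hH.det_pos.ne'), Matrix.one_mulVec]
  have hq : H⁻¹ *ᵥ δ ⬝ᵥ δ = δ ⬝ᵥ v := by rw [hv, dotProduct_comm]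
  have hposW : 0 ≤ H *ᵥ w ⬝ᵥ w := by
    have := hH.posSemidef.dotProduct_mulVec_nonneg w
    rwa [star_trivial, dotProduct_comm] at this
  by_cases hv0 : v = 0
  · have hδ0 : δ = 0 := by rw [← hHv, hv0, Matrix.mulVec_zero]
    simp [hδ0, hq, hv0]
  · have hqpos : 0 < δ ⬝ᵥ v := by
      have := hH.dotProduct_mulVec_pos hv0
      rwa [star_trivial, dotProduct_comm, hHv] at this
    set q := δ ⬝ᵥ v with hqdef
    have h1 : H *ᵥ w ⬝ᵥ v = δ ⬝ᵥ w := by rw [hsym hH.1 w v, hHv, dotProduct_comm]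
    have hexp : ∀ θ : ℝ, H *ᵥ (w - θ • v) ⬝ᵥ (w - θ • v)
        = (H *ᵥ w ⬝ᵥ w) - 2 * θ * (δ ⬝ᵥ w) + θ^2 * q := by
      intro θ
      simp only [Matrix.mulVec_sub, Matrix.mulVec_smul, sub_dotProduct,
        dotProduct_sub, smul_dotProduct, dotProduct_smul,
        smul_eq_mul, hHv]
      rw [h1, ← hqdef]
      ring
    set θ := (δ ⬝ᵥ w) / q with hθ
    have h0 : 0 ≤ H *ᵥ (w - θ • v) ⬝ᵥ (w - θ • v) := by
      have := hH.posSemidef.dotProduct_mulVec_nonneg (w - θ • v)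
      rwa [star_trivial, dotProduct_comm] at this
    have hkey : (δ ⬝ᵥ w)^2 ≤ q * (H *ᵥ w ⬝ᵥ w) := by
      have hq' : q ≠ 0 := hqpos.ne'
      set d := δ ⬝ᵥ w with hd
      have h5 : 0 ≤ (H *ᵥ w ⬝ᵥ w) - 2 * θ * d + θ^2 * q := (hexp θ) ▸ h0
      have h7 : 0 ≤ ((H *ᵥ w ⬝ᵥ w) - 2 * θ * d + θ^2 * q) * q := mul_nonneg h5 hqpos.le
      have e2 : θ^2 * q * q = d^2 := by rw [hθ]; field_simp
      have e3 : θ * d * q = d^2 := by rw [hθ]; field_simp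
      nlinarith [h7, e2, e3]
    calc δ ⬝ᵥ w ≤ |δ ⬝ᵥ w| := le_abs_self _
      _ = Real.sqrt ((δ ⬝ᵥ w)^2) := (Real.sqrt_sq_eq_abs _).symm
      _ ≤ Real.sqrt (q * (H *ᵥ w ⬝ᵥ w)) := Real.sqrt_le_sqrt hkey
      _ = Real.sqrt (H⁻¹ *ᵥ δ ⬝ᵥ δ) * Real.sqrt (H *ᵥ w ⬝ᵥ w) := by
          rw [Real.sqrt_mul hqpos.le, hq]

lemma scalar_upper (r c' : ℝ) (hr0 : 0 ≤ r) (hr1 : r < 1) (hc : 0 ≤ c') :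
    r * c' - (c' - Real.log (1 + c')) ≤ -r - Real.log (1 - r) := by
  have h1 : (0:ℝ) < 1 + c' := by linarith
  have h2 : (0:ℝ) < 1 - r := by linarith
  have h3 : Real.log ((1 + c') * (1 - r)) ≤ (1 + c') * (1 - r) - 1 :=
    Real.log_le_sub_one_of_pos (by positivity)
  rw [Real.log_mul h1.ne' h2.ne'] at h3
  nlinarith

end SCAux
end

/-- Proximity bound via the conjugate pair. -/
theorem prox_bound_conjugate_pair {m : ℕ} (a : ℝ) (Q : Set (Fin m → ℝ))
    (f : (Fin m → ℝ) → ℝ) (hf : IsSelfConcordant a Q f)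
    (hnd : ∀ x ∈ Q, (vhess f x).PosDef)
    (x : Fin m → ℝ) (hx : x ∈ Q)
    (y : Fin m → ℝ) (hy : BddAbove ((fun z => y ⬝ᵥ z - f z) '' Q))
    (r : ℝ) (hr : r = a ^ (-(1:ℝ)/2) * Bnorm (vhess f x)⁻¹ (y - vgrad f x)) :
    ((a : ℝ) : EReal) * rho r ≤ ((f x + LFconj Q f y - y ⬝ᵥ x : ℝ) : EReal) ∧
    ((f x + LFconj Q f y - y ⬝ᵥ x : ℝ) : EReal) ≤ ((a : ℝ) : EReal) * rho (-r) := by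
  obtain ⟨ha, hQ, hconv, hQne, hC, hcvx, hblow, hSC⟩ := hf
  classical
  set g := vgrad f x with hg
  set δ := y - g with hδ
  set H := vhess f x with hH
  have hHpd : H.PosDef := hnd x hx
  set n2 := H⁻¹ *ᵥ δ ⬝ᵥ δ with hn2
  have hn2nn : 0 ≤ n2 := by
    have := hHpd.inv.posSemidef.dotProduct_mulVec_nonneg δ
    rwa [star_trivial, dotProduct_comm] at this
  have hrr : r = Real.sqrt n2 / Real.sqrt a := by
    rw [hr, SCAux.rpow_half ha, Bnorm]
    rw [div_eq_inv_mul]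
  have hr0 : 0 ≤ r := by
    rw [hrr]; positivity
  set S := ((fun z => y ⬝ᵥ z - f z) '' Q) with hS
  have hxS : y ⬝ᵥ x - f x ∈ S := ⟨x, hx, rfl⟩
  have hSne : S.Nonempty := ⟨_, hxS⟩
  have hL : LFconj Q f y = sSup S := rfl
  have hxle : y ⬝ᵥ x - f x ≤ sSup S := le_csSup hy hxS
  constructor
  · -- lower bound
    have hrho : rho r = ((r - Real.log (1 + r) : ℝ) : EReal) := by
      rw [rho, if_pos (by linarith : (-1:ℝ) < r)]
    rw [hrho, ← EReal.coe_mul, EReal.coe_le_coe_iff]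
    by_cases hδ0 : δ = 0
    · have hr00 : r = 0 := by
        rw [hrr, hn2]
        simp [hδ0]
      rw [hr00]
      simp only [add_zero, Real.log_one, sub_zero, mul_zero]
      rw [hL]
      linarith
    · -- construct the point z* = x + t • h
      set v := H⁻¹ *ᵥ δ with hv
      have hHv : H *ᵥ v = δ := by
        rw [hv, Matrix.mulVec_mulVec,
          Matrix.mul_nonsing_inv _ (isUnit_iff_ne_zero.2 hHpd.det_pos.ne'), Matrix.one_mulVec]
      have hv0 : v ≠ 0 := by
        intro hv00
        exact hδ0 (by rw [← hHv, hv00, Matrix.mulVec_zero])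
      have hn2pos : 0 < n2 := by
        have := hHpd.inv.dotProduct_mulVec_pos hδ0
        rwa [star_trivial, dotProduct_comm] at this
      have hrpos : 0 < r := by
        rw [hrr]; positivity
      have hsa : 0 < Real.sqrt a := Real.sqrt_pos.2 ha
      have hsn : 0 < Real.sqrt n2 := Real.sqrt_pos.2 hn2pos
      set s := Real.sqrt a / Real.sqrt n2 with hs
      have hspos : 0 < s := by positivity
      set h := s • v with hhd
      have hne : h ≠ 0 := smul_ne_zero hspos.ne' hv0
      have hdv : δ ⬝ᵥ v = n2 := by rw [hn2, dotProduct_comm]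
      have hpsi0 : iteratedFDeriv ℝ 2 f x (fun _ => h) = a := by
        rw [SCAux.const2, SCAux.hess_apply, ← hH, hhd, Matrix.mulVec_smul,
          smul_dotProduct, dotProduct_smul, hHv, smul_eq_mul, smul_eq_mul, hdv, hs]
        have hsa' : Real.sqrt a ≠ 0 := hsa.ne'
        have hsn' : Real.sqrt n2 ≠ 0 := hsn.ne'
        field_simp
        rw [Real.sq_sqrt ha.le, Real.sq_sqrt hn2nn]; ring
      have hc1 : SCAux.cOf f a x h = 1 := by
        rw [SCAux.cOf]
        rw [show x + (0:ℝ) • h = x by simp]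
        rw [hpsi0, div_self hsa.ne']
      set t := r / (1 + r) with ht
      have ht0 : 0 ≤ t := by positivity
      have ht1 : t < 1 := by
        rw [ht, div_lt_one (by linarith)]
        linarith
      have hseg : ∀ σ ∈ Set.Icc (0:ℝ) t, x + σ • h ∈ Q := by
        intro σ hσ
        exact SCAux.dikin ha hQ hconv hC hSC hblow hnd x hx h hne σ hσ.1
          (by rw [hc1, one_mul]; exact lt_of_le_of_lt hσ.2 ht1)
      have hup := SCAux.seg_upper ha hQ hC hSC hnd x h hne t ht0 hseg
        (by rw [hc1, one_mul]; exact ht1)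
      simp only [hc1, one_mul] at hup
      have hdh : δ ⬝ᵥ h = a * r := by
        rw [hhd, dotProduct_smul, smul_eq_mul, hdv, hs, hrr]
        rw [div_mul_eq_mul_div, ← mul_div_assoc, div_eq_div_iff hsn.ne' hsa.ne']
        linear_combination n2 * Real.mul_self_sqrt ha.le - a * Real.mul_self_sqrt hn2nn
      have hyh : y ⬝ᵥ h = fderiv ℝ f x h + a * r := by
        have : y = g + δ := by rw [hδ]; ring
        rw [this, add_dotProduct, hdh, SCAux.fderiv_dot, hg]
      have hzQ : x + t • h ∈ Q := hseg t ⟨ht0, le_refl t⟩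
      have hmem : y ⬝ᵥ (x + t • h) - f (x + t • h) ∈ S := ⟨_, hzQ, rfl⟩
      have hle2 : y ⬝ᵥ (x + t • h) - f (x + t • h) ≤ sSup S := le_csSup hy hmem
      have hdot : y ⬝ᵥ (x + t • h) = y ⬝ᵥ x + t * (y ⬝ᵥ h) := by
        rw [dotProduct_add, dotProduct_smul, smul_eq_mul]
      have heq : r * t + t + Real.log (1 - t) = r - Real.log (1 + r) := by
        have h1r : (0:ℝ) < 1 + r := by linarith
        have e1 : 1 - t = (1 + r)⁻¹ := by
          rw [ht]; field_simp; ring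
        have e2 : Real.log ((1+r)⁻¹) = - Real.log (1+r) := Real.log_inv _
        have e3 : r * t + t = r := by
          rw [ht]; field_simp; ring
        rw [e1, e2]
        linarith
      have hty : t * (y ⬝ᵥ h) = t * fderiv ℝ f x h + a * (r * t) := by
        rw [hyh]; ring
      have e : a * (-t - Real.log (1-t)) = -(a*t) - a * Real.log (1-t) := by ring
      rw [e] at hup
      have hae : a*(r*t) + a*t + a*Real.log (1-t) = a*r - a*Real.log (1+r) := by
        linear_combination a * heq
      rw [hL, show a*(r - Real.log (1+r)) = a*r - a*Real.log (1+r) by ring]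
      linarith [hle2, hup, hdot, hty, hae]
  · -- upper bound
    by_cases hr1 : r < 1
    · have hrho : rho (-r) = ((-r - Real.log (1 - r) : ℝ) : EReal) := by
        rw [rho, if_pos (by linarith : (-1:ℝ) < -r)]
        rw [show (1:ℝ) + -r = 1 - r by ring]
      rw [hrho, ← EReal.coe_mul, EReal.coe_le_coe_iff]
      have hub : ∀ w ∈ S, w ≤ (y ⬝ᵥ x - f x) + a * (-r - Real.log (1 - r)) := by
        rintro w ⟨z, hz, rfl⟩
        simp only
        by_cases hzx : z - x = 0
        · have hzx' : z = x := by
            have := sub_eq_zero.1 hzx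
            exact this
          subst hzx'
          have hρ : 0 ≤ -r - Real.log (1 - r) := by
            have := Real.log_le_sub_one_of_pos (by linarith : (0:ℝ) < 1 - r)
            linarith
          nlinarith [mul_nonneg ha.le hρ]
        · set w' := z - x with hw'
          have hseg : ∀ σ ∈ Set.Icc (0:ℝ) 1, x + σ • w' ∈ Q := by
            intro σ hσ
            exact hconv.add_smul_sub_mem hx hz hσ
          have hlo := SCAux.seg_lower ha hQ hC hSC hnd x w' hzx 1 zero_le_one hseg
          simp only [one_mul, mul_one] at hlo
          set c' := SCAux.cOf f a x w' with hc'
          have hc'0 : 0 < c' :=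
            SCAux.cOf_pos ha hnd (by simpa using hx) hzx
          have hz1 : x + (1:ℝ) • w' = z := by
            rw [one_smul, hw']; abel
          rw [hz1] at hlo
          -- Cauchy-Schwarz
          have hcs := SCAux.cs hHpd δ w'
          have hsqw : Real.sqrt (H *ᵥ w' ⬝ᵥ w') = c' * Real.sqrt a := by
            rw [hc', SCAux.cOf, show x + (0:ℝ) • w' = x by simp, SCAux.const2,
              SCAux.hess_apply, ← hH, div_mul_cancel₀ _ (Real.sqrt_pos.2 ha).ne']
          have hsqd : Real.sqrt (H⁻¹ *ᵥ δ ⬝ᵥ δ) = r * Real.sqrt a := by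
            rw [← hn2, hrr, div_mul_cancel₀ _ (Real.sqrt_pos.2 ha).ne']
          rw [hsqw, hsqd] at hcs
          have hcs2 : δ ⬝ᵥ w' ≤ a * (r * c') := by
            calc δ ⬝ᵥ w' ≤ r * Real.sqrt a * (c' * Real.sqrt a) := hcs
              _ = a * (r * c') := by
                  linear_combination (r*c') * Real.mul_self_sqrt ha.le
          have hsc := SCAux.scalar_upper r c' hr0 hr1 hc'0.le
          have hyw : y ⬝ᵥ z = y ⬝ᵥ x + (fderiv ℝ f x w' + δ ⬝ᵥ w') := by
            have h1 : y ⬝ᵥ w' = fderiv ℝ f x w' + δ ⬝ᵥ w' := by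
              rw [SCAux.fderiv_dot, show y = vgrad f x + δ by rw [hδ, hg]; ring,
                add_dotProduct]
            have h2 : y ⬝ᵥ z = y ⬝ᵥ x + y ⬝ᵥ w' := by
              rw [← dotProduct_add]
              congr 1
              rw [hw']
              abel
            rw [h2, h1]
          have step3 := mul_le_mul_of_nonneg_left hsc ha.le
          rw [mul_sub] at step3
          linarith [hlo, hcs2, step3, hyw.le, hyw.ge]
      have hLle : sSup S ≤ (y ⬝ᵥ x - f x) + a * (-r - Real.log (1 - r)) := csSup_le hSne hub
      rw [hL]
      linarith
    · have hrho : rho (-r) = ⊤ := by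
        rw [rho, if_neg (by push_neg; linarith)]
      rw [hrho, EReal.mul_top_of_pos (by exact_mod_cast ha : (0:EReal) < (a:ℝ))]
      exact le_top
end

section
/- Projection identity: let 𝓗 be an N×N symmetric positive definite matrix, U an N×k matrix with linearly independent columns, and U⊥ an (N−k)×N matrix whose rows form a basis of the kernel of Uᵀ. Then for every f ∈ ℝᴺ, fᵀU(Uᵀ𝓗U)^{−1}Uᵀf = fᵀ𝓗^{−1}f − fᵀ𝓗^{−1}(U⊥)ᵀ(U⊥𝓗^{−1}(U⊥)ᵀ)^{−1}U⊥𝓗^{−1}f. -/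
open Matrix Filter

open Matrix in
lemma myPosDef_conj {N m : ℕ} {A : Matrix (Fin N) (Fin N) ℝ} (hA : A.PosDef)
    (B : Matrix (Fin N) (Fin m) ℝ) (hB : Function.Injective B.mulVec) :
    (Bᵀ * A * B).PosDef := by
  refine Matrix.posDef_iff_dotProduct_mulVec.mpr ⟨?_, ?_⟩
  · have h := (hA.posSemidef.conjTranspose_mul_mul_same B).isHermitian
    rwa [conjTranspose_eq_transpose_of_trivial] at h
  · intro x hx
    have hx' : B *ᵥ x ≠ 0 := fun h => hx (hB (by simpa using h))
    have := hA.dotProduct_mulVec_pos hx'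
    simpa [star_trivial, ← mulVec_mulVec, dotProduct_mulVec, vecMul_transpose,
      Matrix.mul_assoc] using this


/-- Projection identity. -/
theorem projection_identity {N k : ℕ} (H : Matrix (Fin N) (Fin N) ℝ)
    (hH : H.PosDef)
    (U : Matrix (Fin N) (Fin k) ℝ)
    (hU : LinearIndependent ℝ (fun j => Uᵀ j))
    (Uperp : Matrix (Fin (N - k)) (Fin N) ℝ)
    (hUperp : rowsBasisOfKernel Uperp Uᵀ)
    (f : Fin N → ℝ) :
    f ⬝ᵥ U.mulVec ((Uᵀ * H * U)⁻¹.mulVec (Uᵀ.mulVec f)) =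
      f ⬝ᵥ H⁻¹.mulVec f -
        f ⬝ᵥ H⁻¹.mulVec (Uperpᵀ.mulVec ((Uperp * H⁻¹ * Uperpᵀ)⁻¹.mulVec
          (Uperp.mulVec (H⁻¹.mulVec f)))) := by
  classical
  obtain ⟨hli, hker⟩ := hUperp
  have injU : Function.Injective U.mulVec := Matrix.mulVec_injective_iff.mpr hU
  have injUp : Function.Injective Uperpᵀ.mulVec :=
    Matrix.mulVec_injective_iff.mpr (by simpa [Matrix.row] using hli)
  -- orthogonality
  have hUU : Uᵀ * Uperpᵀ = 0 := by
    ext i s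
    have hm : Uperp s ∈ LinearMap.ker Uᵀ.mulVecLin :=
      hker ▸ Submodule.subset_span ⟨s, rfl⟩
    have h0 : Uᵀ *ᵥ Uperp s = 0 := hm
    have := congrFun h0 i
    simpa [Matrix.mul_apply, Matrix.mulVec, dotProduct] using this
  have hpU : Uperp * U = 0 := by
    have := congrArg Matrix.transpose hUU
    simpa using this
  -- pos def matrices
  have hS : (Uᵀ * H * U).PosDef := myPosDef_conj hH U injU
  have hT : (Uperp * H⁻¹ * Uperpᵀ).PosDef := by
    have := myPosDef_conj hH.inv Uperpᵀ injUp
    simpa using this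
  set S := Uᵀ * H * U with hSdef
  set T := Uperp * H⁻¹ * Uperpᵀ with hTdef
  have hSinv : S⁻¹ * S = 1 :=
    Matrix.nonsing_inv_mul _ ((Matrix.isUnit_iff_isUnit_det S).mp hS.isUnit)
  have hTinv : T⁻¹ * T = 1 :=
    Matrix.nonsing_inv_mul _ ((Matrix.isUnit_iff_isUnit_det T).mp hT.isUnit)
  have hHinv : H⁻¹ * H = 1 :=
    Matrix.nonsing_inv_mul _ ((Matrix.isUnit_iff_isUnit_det H).mp hH.isUnit)
  -- surjectivity of (a,b) ↦ H U a + Uperpᵀ b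
  have hkN : k ≤ N := by
    have := hU.fintype_card_le_finrank
    simpa using this
  let L : ((Fin k → ℝ) × (Fin (N - k) → ℝ)) →ₗ[ℝ] (Fin N → ℝ) :=
    LinearMap.coprod (H * U).mulVecLin Uperpᵀ.mulVecLin
  have hLinj : Function.Injective L := by
    rw [← LinearMap.ker_eq_bot]
    refine (Submodule.eq_bot_iff _).mpr ?_
    rintro ⟨a, b⟩ hab
    have hab' : (H * U) *ᵥ a + Uperpᵀ *ᵥ b = 0 := hab
    have h1 : S *ᵥ a = 0 := by
      have := congrArg Uᵀ.mulVec hab'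
      simpa [hSdef, Matrix.mulVec_add, Matrix.mulVec_mulVec, hUU, Matrix.mul_assoc]
        using this
    have ha : a = 0 := by
      have hinjS : Function.Injective S.mulVec :=
        Matrix.mulVec_injective_iff_isUnit.mpr hS.isUnit
      exact hinjS (by simpa using h1)
    have hb : b = 0 := by
      apply injUp
      have := hab'
      rw [ha] at this
      simpa using this
    simp [ha, hb, Prod.ext_iff]
  have hdim : Module.finrank ℝ ((Fin k → ℝ) × (Fin (N - k) → ℝ)) =
      Module.finrank ℝ (Fin N → ℝ) := by
    simp [Module.finrank_prod]
    omega
  have hsurj := (LinearMap.injective_iff_surjective_of_finrank_eq_finrank hdim).mp hLinj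
  obtain ⟨⟨a, b⟩, hab⟩ := hsurj f
  have hf : H *ᵥ (U *ᵥ a) + Uperpᵀ *ᵥ b = f := by
    simp only [L, LinearMap.coprod_apply, Matrix.mulVecLin_apply] at hab
    rw [← hab, ← Matrix.mulVec_mulVec]
  -- the key vector identities
  have h1 : Uᵀ *ᵥ f = S *ᵥ a := by
    rw [← hf]
    simp [hSdef, Matrix.mulVec_add, Matrix.mulVec_mulVec, hUU, Matrix.mul_assoc]
  have h2 : S⁻¹ *ᵥ (S *ᵥ a) = a := by
    rw [Matrix.mulVec_mulVec, hSinv, Matrix.one_mulVec]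
  have h3 : H⁻¹ *ᵥ f = U *ᵥ a + H⁻¹ *ᵥ (Uperpᵀ *ᵥ b) := by
    rw [← hf]
    simp [Matrix.mulVec_add, Matrix.mulVec_mulVec, ← Matrix.mul_assoc, hHinv]
  have h4 : Uperp *ᵥ (H⁻¹ *ᵥ f) = T *ᵥ b := by
    rw [h3]
    simp [hTdef, Matrix.mulVec_add, Matrix.mulVec_mulVec, hpU, Matrix.mul_assoc]
  have h5 : T⁻¹ *ᵥ (T *ᵥ b) = b := by
    rw [Matrix.mulVec_mulVec, hTinv, Matrix.one_mulVec]
  show f ⬝ᵥ U *ᵥ (S⁻¹ *ᵥ (Uᵀ *ᵥ f)) =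
      f ⬝ᵥ H⁻¹ *ᵥ f - f ⬝ᵥ H⁻¹ *ᵥ (Uperpᵀ *ᵥ (T⁻¹ *ᵥ (Uperp *ᵥ (H⁻¹ *ᵥ f))))
  rw [h1, h2, h4, h5, h3]
  simp [Matrix.mulVec_add, dotProduct_add]
end

section
/- Halving identity for the special block structure: let H̄ be an (m+1)×(m+1) symmetric positive definite matrix, μ > 0, and 𝓗 := blockdiag(H̄, μ^{−2}H̄^{−1}), a (2m+2)×(2m+2) matrix. Let U be a (2m+2)×(m+1) matrix with linearly independent columns and U⊥ a (m+1)×(2m+2) matrix whose rows form a basis of the kernel of Uᵀ, such that U⊥ = UᵀP where P is the block permutation matrix [[0, I_{m+1}],[I_{m+1}, 0]]. Then for every f = (f₁; f₂) ∈ ℝ^{2m+2} with f₁ = μH̄f₂ or f₁ = −μH̄f₂, one has fᵀU(Uᵀ𝓗U)^{−1}Uᵀf = (1/2)·fᵀ𝓗^{−1}f. -/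
open Matrix Filter

section AuxHalving

open Matrix

private lemma dot_shift {ι κ : Type*} [Fintype ι] [Fintype κ]
    (M : Matrix ι κ ℝ) (x : κ → ℝ) (w : ι → ℝ) :
    (M.mulVec x) ⬝ᵥ w = x ⬝ᵥ (Mᵀ.mulVec w) := by
  rw [dotProduct_comm, Matrix.dotProduct_mulVec, ← Matrix.mulVec_transpose,
    dotProduct_comm]

private lemma dot_sum_elim {ι κ : Type*} [Fintype ι] [Fintype κ]
    (a b : ι → ℝ) (c d : κ → ℝ) :
    Sum.elim a c ⬝ᵥ Sum.elim b d = a ⬝ᵥ b + c ⬝ᵥ d := by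
  simp [dotProduct, Fintype.sum_sum_type]

private lemma dot_sum_elim' {ι κ : Type*} [Fintype ι] [Fintype κ]
    (x : ι ⊕ κ → ℝ) (b : ι → ℝ) (d : κ → ℝ) :
    x ⬝ᵥ Sum.elim b d = (x ∘ Sum.inl) ⬝ᵥ b + (x ∘ Sum.inr) ⬝ᵥ d := by
  simp [dotProduct, Fintype.sum_sum_type]

end AuxHalving

set_option maxHeartbeats 1000000 in
/-- Halving identity for the special block structure. -/
theorem halving_identity {m : ℕ}
    (Hb : Matrix (Fin (m + 1)) (Fin (m + 1)) ℝ) (hHb : Hb.PosDef)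
    (μ : ℝ) (hμ : 0 < μ)
    (H : Matrix (Fin (m + 1) ⊕ Fin (m + 1)) (Fin (m + 1) ⊕ Fin (m + 1)) ℝ)
    (hH : H = Matrix.fromBlocks Hb 0 0 ((μ ^ 2)⁻¹ • Hb⁻¹))
    (U : Matrix (Fin (m + 1) ⊕ Fin (m + 1)) (Fin (m + 1)) ℝ)
    (hU : LinearIndependent ℝ (fun j => Uᵀ j))
    (Uperp : Matrix (Fin (m + 1)) (Fin (m + 1) ⊕ Fin (m + 1)) ℝ)
    (hUperpKer : rowsBasisOfKernel Uperp Uᵀ)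
    (hUperpP : Uperp = Uᵀ * Matrix.fromBlocks 0 1 1 0)
    (f1 f2 : Fin (m + 1) → ℝ)
    (hf : f1 = μ • Hb.mulVec f2 ∨ f1 = -(μ • Hb.mulVec f2))
    (f : Fin (m + 1) ⊕ Fin (m + 1) → ℝ) (hfdef : f = Sum.elim f1 f2) :
    f ⬝ᵥ U.mulVec ((Uᵀ * H * U)⁻¹.mulVec (Uᵀ.mulVec f)) =
      (1 / 2) * (f ⬝ᵥ H⁻¹.mulVec f) := by
  -- normalize the sign hypothesis
  obtain ⟨ε, hε2, hf1⟩ : ∃ ε : ℝ, ε * ε = 1 ∧ f1 = (ε * μ) • Hb.mulVec f2 := by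
    rcases hf with h | h
    · exact ⟨1, by norm_num, by rw [h, one_mul]⟩
    · exact ⟨-1, by norm_num, by rw [h, ← neg_smul, neg_mul, one_mul]⟩
  have hμ0 : μ ≠ 0 := ne_of_gt hμ
  have hHbT : Hbᵀ = Hb := by
    have h1 := hHb.1
    rwa [Matrix.IsHermitian, Matrix.conjTranspose_eq_transpose_of_trivial] at h1
  have hdet : IsUnit Hb.det := hHb.det_pos.ne'.isUnit
  have hHb1 : Hb * Hb⁻¹ = 1 := Matrix.mul_nonsing_inv Hb hdet
  have hHb1' : Hb⁻¹ * Hb = 1 := Matrix.nonsing_inv_mul Hb hdet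
  set P : Matrix (Fin (m+1) ⊕ Fin (m+1)) (Fin (m+1) ⊕ Fin (m+1)) ℝ :=
    Matrix.fromBlocks 0 1 1 0 with hPdef
  set G : Matrix (Fin (m+1) ⊕ Fin (m+1)) (Fin (m+1) ⊕ Fin (m+1)) ℝ :=
    Matrix.fromBlocks Hb⁻¹ 0 0 ((μ^2) • Hb) with hGdef
  have hμ2 : (μ^2)⁻¹ * (μ^2) = 1 := inv_mul_cancel₀ (by positivity)
  have hμ2' : (μ^2) * (μ^2)⁻¹ = 1 := mul_inv_cancel₀ (by positivity)
  have hHG : H * G = 1 := by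
    rw [hH, hGdef, Matrix.fromBlocks_multiply, ← Matrix.fromBlocks_one]
    congr 1 <;>
      simp [Matrix.smul_mul, Matrix.mul_smul, smul_smul, hμ2, hμ2', hHb1, hHb1']
  have hGH : G * H = 1 := by
    rw [hH, hGdef, Matrix.fromBlocks_multiply, ← Matrix.fromBlocks_one]
    congr 1 <;>
      simp [Matrix.smul_mul, Matrix.mul_smul, smul_smul, hμ2, hμ2', hHb1, hHb1']
  have hHinv : H⁻¹ = G := Matrix.inv_eq_right_inv hHG
  have hHT : Hᵀ = H := by
    rw [hH]
    simp [Matrix.fromBlocks_transpose, Matrix.transpose_smul,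
      Matrix.transpose_nonsing_inv, hHbT]
  have hPT : Pᵀ = P := by
    simp [hPdef, Matrix.fromBlocks_transpose]
  have hPP : P * P = 1 := by
    rw [hPdef, Matrix.fromBlocks_multiply, ← Matrix.fromBlocks_one]
    congr 1 <;> simp
  have hHPH : H * P * H = (μ^2)⁻¹ • P := by
    rw [hH, hPdef, Matrix.fromBlocks_multiply, Matrix.fromBlocks_multiply,
      Matrix.fromBlocks_smul]
    congr 1 <;>
      simp [Matrix.smul_mul, Matrix.mul_smul, hHb1, hHb1']
  have hPGP : P * G * P = (μ^2) • H := by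
    rw [hH, hPdef, hGdef, Matrix.fromBlocks_multiply, Matrix.fromBlocks_multiply,
      Matrix.fromBlocks_smul]
    congr 1 <;>
      simp [smul_smul, hμ2']
  -- the kernel matrix P * U
  have hPU : P * U = Uperpᵀ := by
    have e : Uperp = (Uᵀ * P : Matrix _ _ ℝ) := hUperpP
    rw [e, Matrix.transpose_mul, Matrix.transpose_transpose, hPT]
  have hrows : ∀ s, Uᵀ.mulVec (Uperp s) = 0 := by
    intro s
    have hs : Uperp s ∈ LinearMap.ker (Uᵀ).mulVecLin := by
      rw [← hUperpKer.2]
      exact Submodule.subset_span ⟨s, rfl⟩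
    have hs' := LinearMap.mem_ker.mp hs
    rwa [Matrix.mulVecLin_apply] at hs'
  have hUPU : Uᵀ * (P * U) = 0 := by
    rw [hPU]
    ext i s
    have h := congrFun (hrows s) i
    simpa [Matrix.mul_apply, Matrix.mulVec, dotProduct] using h
  -- positive definiteness of H
  have hHpd : H.PosDef := by
    refine Matrix.posDef_iff_dotProduct_mulVec.mpr ⟨?_, ?_⟩
    · rw [Matrix.IsHermitian, Matrix.conjTranspose_eq_transpose_of_trivial, hHT]
    · intro x hx
      have hxe : Sum.elim (x ∘ Sum.inl) (x ∘ Sum.inr) = x := Sum.elim_comp_inl_inr x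
      have hsplit : star x ⬝ᵥ H.mulVec x
          = (x ∘ Sum.inl) ⬝ᵥ Hb.mulVec (x ∘ Sum.inl)
            + (μ^2)⁻¹ * ((x ∘ Sum.inr) ⬝ᵥ Hb⁻¹.mulVec (x ∘ Sum.inr)) := by
        rw [star_trivial, hH, Matrix.fromBlocks_mulVec, dot_sum_elim']
        simp [Matrix.zero_mulVec, Matrix.smul_mulVec, dotProduct_smul]
      rw [hsplit]
      rcases (by
        by_contra hcon
        push_neg at hcon
        apply hx
        funext i
        cases i with
        | inl i => exact congrFun hcon.1 i
        | inr i => exact congrFun hcon.2 i : (x ∘ Sum.inl) ≠ 0 ∨ (x ∘ Sum.inr) ≠ 0) with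
        h1 | h2
      · have p1 := hHb.dotProduct_mulVec_pos h1
        have p2 := hHb.inv.posSemidef.dotProduct_mulVec_nonneg (x ∘ Sum.inr)
        simp only [star_trivial] at p1 p2
        have : 0 ≤ (μ^2)⁻¹ * ((x ∘ Sum.inr) ⬝ᵥ Hb⁻¹.mulVec (x ∘ Sum.inr)) := by
          have : (0:ℝ) < (μ^2)⁻¹ := by positivity
          exact mul_nonneg this.le p2
        linarith
      · have p1 := hHb.posSemidef.dotProduct_mulVec_nonneg (x ∘ Sum.inl)
        have p2 := hHb.inv.dotProduct_mulVec_pos h2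
        simp only [star_trivial] at p1 p2
        have : 0 < (μ^2)⁻¹ * ((x ∘ Sum.inr) ⬝ᵥ Hb⁻¹.mulVec (x ∘ Sum.inr)) := by
          have h0 : (0:ℝ) < (μ^2)⁻¹ := by positivity
          exact mul_pos h0 p2
        linarith
  -- S = Uᵀ H U is positive definite
  set S : Matrix (Fin (m+1)) (Fin (m+1)) ℝ := Uᵀ * H * U with hSdef
  have hST : Sᵀ = S := by
    rw [hSdef, Matrix.transpose_mul, Matrix.transpose_mul, Matrix.transpose_transpose,
      hHT, Matrix.mul_assoc]
  have hSpd : S.PosDef := by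
    refine Matrix.posDef_iff_dotProduct_mulVec.mpr ⟨?_, ?_⟩
    · rw [Matrix.IsHermitian, Matrix.conjTranspose_eq_transpose_of_trivial, hST]
    · intro x hx
      have hUx : U.mulVec x ≠ 0 := by
        intro h0
        apply hx
        have hli := Fintype.linearIndependent_iff.mp hU x (by
          funext i
          have := congrFun h0 i
          simpa [Matrix.mulVec, dotProduct, Finset.sum_apply, mul_comm] using this)
        funext j
        exact hli j
      have hp := hHpd.dotProduct_mulVec_pos hUx
      simp only [star_trivial] at hp ⊢
      calc x ⬝ᵥ S.mulVec x = x ⬝ᵥ (Uᵀ.mulVec (H.mulVec (U.mulVec x))) := by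
            rw [hSdef, Matrix.mulVec_mulVec, Matrix.mulVec_mulVec]
        _ = (U.mulVec x) ⬝ᵥ H.mulVec (U.mulVec x) := by
            rw [Matrix.dotProduct_mulVec, ← Matrix.mulVec_transpose,
              Matrix.transpose_transpose, dotProduct_comm]
        _ > 0 := hp
  have hSdet : IsUnit S.det := hSpd.det_pos.ne'.isUnit
  have hSS : S * S⁻¹ = 1 := Matrix.mul_nonsing_inv S hSdet
  have hSS' : S⁻¹ * S = 1 := Matrix.nonsing_inv_mul S hSdet
  -- main vectors
  set y : Fin (m+1) → ℝ := S⁻¹.mulVec (Uᵀ.mulVec f) with hydef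
  set g : Fin (m+1) ⊕ Fin (m+1) → ℝ := G.mulVec f with hgdef
  set r : Fin (m+1) ⊕ Fin (m+1) → ℝ := g - U.mulVec y with hrdef
  have hSy : S.mulVec y = Uᵀ.mulVec f := by
    rw [hydef, Matrix.mulVec_mulVec, hSS, Matrix.one_mulVec]
  have hHg : H.mulVec g = f := by
    rw [hgdef, Matrix.mulVec_mulVec, hHG, Matrix.one_mulVec]
  have hgUy : g = U.mulVec y + r := by
    rw [hrdef]; abel
  have hHr : H.mulVec r = f - (H * U).mulVec y := by
    rw [hrdef, Matrix.mulVec_sub, hHg, Matrix.mulVec_mulVec]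
  have hUHr : Uᵀ.mulVec (H.mulVec r) = 0 := by
    rw [hHr, Matrix.mulVec_sub, Matrix.mulVec_mulVec, ← Matrix.mul_assoc, ← hSdef, hSy,
      sub_self]
  -- write H r in terms of the kernel basis
  obtain ⟨c, hc0⟩ : ∃ c : Fin (m+1) → ℝ, ∑ s, c s • Uperp s = H.mulVec r := by
    have hker : H.mulVec r ∈ Submodule.span ℝ (Set.range fun s => Uperp s) := by
      rw [hUperpKer.2]
      refine LinearMap.mem_ker.mpr ?_
      rw [Matrix.mulVecLin_apply]
      exact hUHr
    exact (Submodule.mem_span_range_iff_exists_fun ℝ).mp hker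
  have hc : H.mulVec r = (P * U).mulVec c := by
    rw [← hc0, hPU]
    funext i
    simp [Matrix.mulVec, dotProduct, Finset.sum_apply, mul_comm]
  have hrG : r = G.mulVec ((P * U).mulVec c) := by
    rw [← hc]
    rw [Matrix.mulVec_mulVec, hGH, Matrix.one_mulVec]
  have hfdecomp : f = (H * U).mulVec y + (P * U).mulVec c := by
    rw [← hHg, hgUy, Matrix.mulVec_add, Matrix.mulVec_mulVec, hc]
  -- g = (ε μ) • P f
  have hμεμ : (ε * μ) * (ε * μ) = μ ^ 2 := by
    rw [show ε * μ * (ε * μ) = (ε * ε) * (μ * μ) by ring, hε2, one_mul, sq]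
  have hv1 : Hb⁻¹.mulVec f1 = (ε * μ) • f2 := by
    rw [hf1, Matrix.mulVec_smul, Matrix.mulVec_mulVec, hHb1', Matrix.one_mulVec]
  have hv2 : (μ^2) • (Hb.mulVec f2) = (ε * μ) • f1 := by
    rw [hf1, smul_smul, hμεμ]
  have hgP : g = (ε * μ) • P.mulVec f := by
    rw [hgdef, hfdef, hGdef, hPdef, Matrix.fromBlocks_mulVec, Matrix.fromBlocks_mulVec]
    funext i
    cases i with
    | inl i =>
      simp only [Sum.elim_comp_inl, Sum.elim_comp_inr, Sum.elim_inl, Pi.add_apply,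
        Matrix.zero_mulVec, Pi.zero_apply, add_zero, zero_add, Pi.smul_apply, smul_eq_mul,
        Matrix.one_mulVec]
      have h := congrFun hv1 i
      simpa using h
    | inr i =>
      simp only [Sum.elim_comp_inl, Sum.elim_comp_inr, Sum.elim_inr, Pi.add_apply,
        Matrix.zero_mulVec, Pi.zero_apply, add_zero, zero_add, Pi.smul_apply, smul_eq_mul,
        Matrix.one_mulVec, Matrix.smul_mulVec]
      have h := congrFun hv2 i
      simpa using h
  -- derive y = (ε μ) • c
  have hPr : P.mulVec r = (μ^2) • ((H * U).mulVec c) := by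
    rw [hrG]
    have e1 : P.mulVec (G.mulVec ((P * U).mulVec c)) = (P * G * P * U).mulVec c := by
      simp only [Matrix.mulVec_mulVec, Matrix.mul_assoc]
    rw [e1, show P * G * P * U = (μ^2) • (H * U) by rw [hPGP, Matrix.smul_mul],
      Matrix.smul_mulVec]
  have hy : y = (ε * μ) • c := by
    have hPg1 : P.mulVec g = (ε * μ) • f := by
      rw [hgP, Matrix.mulVec_smul, Matrix.mulVec_mulVec, hPP, Matrix.one_mulVec]
    have hPg2 : P.mulVec g = P.mulVec (U.mulVec y) + ((μ^2) • ((H * U).mulVec c)) := by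
      rw [hgUy, Matrix.mulVec_add, hPr]
    have hkey : (ε * μ) • (Uᵀ.mulVec f) = (μ^2) • S.mulVec c := by
      have h1 : Uᵀ.mulVec (P.mulVec g) = (ε * μ) • (Uᵀ.mulVec f) := by
        rw [hPg1, Matrix.mulVec_smul]
      have h2 : Uᵀ.mulVec (P.mulVec g) = (μ^2) • S.mulVec c := by
        rw [hPg2, Matrix.mulVec_add, Matrix.mulVec_smul]
        have e2 : Uᵀ.mulVec (P.mulVec (U.mulVec y)) = (Uᵀ * (P * U)).mulVec y := by
          simp only [Matrix.mulVec_mulVec, Matrix.mul_assoc]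
        have e3 : Uᵀ.mulVec ((H * U).mulVec c) = S.mulVec c := by
          rw [hSdef]; simp only [Matrix.mulVec_mulVec, Matrix.mul_assoc]
        rw [e2, hUPU, Matrix.zero_mulVec, zero_add, e3]
      rw [← h1, h2]
    have hSyc : S.mulVec y = (ε * μ) • S.mulVec c := by
      rw [hSy]
      have h := congrArg (fun v => (ε * μ⁻¹) • v) hkey
      simp only [smul_smul] at h
      have he1 : ε * μ⁻¹ * (ε * μ) = 1 := by
        rw [show ε * μ⁻¹ * (ε * μ) = (ε * ε) * (μ⁻¹ * μ) by ring, hε2,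
          inv_mul_cancel₀ hμ0, one_mul]
      have he2 : ε * μ⁻¹ * μ ^ 2 = ε * μ := by
        rw [show ε * μ⁻¹ * μ ^ 2 = ε * (μ⁻¹ * μ) * μ by ring, inv_mul_cancel₀ hμ0]
        ring
      rwa [he1, one_smul, he2] at h
    calc y = (S⁻¹ * S).mulVec y := by rw [hSS', Matrix.one_mulVec]
      _ = S⁻¹.mulVec (S.mulVec y) := (Matrix.mulVec_mulVec y S⁻¹ S).symm
      _ = (ε * μ) • S⁻¹.mulVec (S.mulVec c) := by rw [hSyc, Matrix.mulVec_smul]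
      _ = (ε * μ) • c := by rw [Matrix.mulVec_mulVec, hSS', Matrix.one_mulVec]
  -- scalar computations
  have key1 : ((P * U).mulVec c) ⬝ᵥ (U.mulVec y) = 0 := by
    rw [dot_shift, Matrix.transpose_mul, hPT, Matrix.mulVec_mulVec, Matrix.mul_assoc,
      hUPU, Matrix.zero_mulVec, dotProduct_zero]
  have key2 : ((H * U).mulVec y) ⬝ᵥ (U.mulVec y) = y ⬝ᵥ S.mulVec y := by
    rw [dot_shift, Matrix.transpose_mul, hHT, Matrix.mulVec_mulVec, ← hSdef]
  have key3 : ((H * U).mulVec y) ⬝ᵥ r = 0 := by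
    rw [dot_shift, Matrix.transpose_mul, hHT, ← Matrix.mulVec_mulVec, hUHr,
      dotProduct_zero]
  have key4 : ((P * U).mulVec c) ⬝ᵥ r = (μ^2) * (c ⬝ᵥ S.mulVec c) := by
    rw [dot_shift, Matrix.transpose_mul, hPT]
    have e4 : (Uᵀ * P).mulVec r = Uᵀ.mulVec (P.mulVec r) := by
      rw [Matrix.mulVec_mulVec]
    rw [e4, hPr, Matrix.mulVec_smul, dotProduct_smul, smul_eq_mul]
    have e3 : Uᵀ.mulVec ((H * U).mulVec c) = S.mulVec c := by
      rw [hSdef]; simp only [Matrix.mulVec_mulVec, Matrix.mul_assoc]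
    rw [e3]
  have hySy : y ⬝ᵥ S.mulVec y = (μ^2) * (c ⬝ᵥ S.mulVec c) := by
    rw [hy, Matrix.mulVec_smul, smul_dotProduct, dotProduct_smul,
      smul_eq_mul, smul_eq_mul, ← mul_assoc, hμεμ]
  -- conclude
  have hL : f ⬝ᵥ U.mulVec y = (μ^2) * (c ⬝ᵥ S.mulVec c) := by
    conv_lhs => rw [hfdecomp]
    rw [add_dotProduct, key1, key2, add_zero, hySy]
  have hfr : f ⬝ᵥ r = (μ^2) * (c ⬝ᵥ S.mulVec c) := by
    conv_lhs => rw [hfdecomp]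
    rw [add_dotProduct, key3, key4, zero_add]
  have hR : f ⬝ᵥ H⁻¹.mulVec f = 2 * ((μ^2) * (c ⬝ᵥ S.mulVec c)) := by
    rw [hHinv, ← hgdef, hgUy, dotProduct_add, hL, hfr]
    ring
  rw [hL, hR]
  ring
end

section
/- Dikin-type bound for the predictor direction: let (x,τ,y) ∈ Q_DD, μ := μ(x,τ,y), ε̄ ∈ (0,1), and suppose (1−ε̄)²·H̄(x(μ),τ(μ)) ⪯ H̄(x,τ) ⪯ (1−ε̄)^{−2}·H̄(x(μ),τ(μ)) and (1−ε̄)²·[H̄(x(μ),τ(μ))]^{−1} ⪯ μ²·Ĥ^{−1} ⪯ (1−ε̄)^{−2}·[H̄(x(μ),τ(μ))]^{−1}, where (x(μ),τ(μ),y(μ)) is the unique solution of (CP_μ). Let d be the solution of Uᵀ𝓗(H̄(x,τ), Ĥ)U d = r⁰/μ². Then dᵀ Uᵀ𝓗(H̄(x,τ), μ²H̄(x,τ))U d ≤ (1−ε̄)^{−6}·ξϑ/μ². -/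
open Matrix Filter

section auxLemmas
open Matrix
set_option linter.unusedSectionVars false

variable {ι : Type*} [Fintype ι] [DecidableEq ι]

lemma quad_nonneg {P : Matrix ι ι ℝ} (hP : P.PosSemidef) (x : ι → ℝ) :
    0 ≤ x ⬝ᵥ P.mulVec x := by simpa using hP.dotProduct_mulVec_nonneg x

lemma quad_pos {P : Matrix ι ι ℝ} (hP : P.PosDef) {x : ι → ℝ} (hx : x ≠ 0) :
    0 < x ⬝ᵥ P.mulVec x := by simpa using hP.dotProduct_mulVec_pos hx

lemma loewner_quad {A B : Matrix ι ι ℝ} (h : loewnerLE A B) (x : ι → ℝ) :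
    x ⬝ᵥ A.mulVec x ≤ x ⬝ᵥ B.mulVec x := by
  have h0 : 0 ≤ x ⬝ᵥ (B - A).mulVec x := quad_nonneg h x
  rw [Matrix.sub_mulVec, dotProduct_sub] at h0
  linarith

lemma symm_dot {P : Matrix ι ι ℝ} (hP : P.IsHermitian) (a b : ι → ℝ) :
    a ⬝ᵥ P.mulVec b = b ⬝ᵥ P.mulVec a := by
  have hPt : Pᵀ = P := by
    have := hP; rwa [Matrix.IsHermitian, conjTranspose_eq_transpose_of_trivial] at this
  rw [Matrix.dotProduct_mulVec, ← Matrix.mulVec_transpose, hPt, dotProduct_comm]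

lemma cs_ineq {P : Matrix ι ι ℝ} (hP : P.PosSemidef) (a b : ι → ℝ) :
    (a ⬝ᵥ P.mulVec b) ^ 2 ≤ (a ⬝ᵥ P.mulVec a) * (b ⬝ᵥ P.mulVec b) := by
  have key : ∀ t : ℝ, 0 ≤ (b ⬝ᵥ P.mulVec b) * (t * t) + (2 * (a ⬝ᵥ P.mulVec b)) * t
      + (a ⬝ᵥ P.mulVec a) := by
    intro t
    have h0 := quad_nonneg hP (a + t • b)
    rw [Matrix.mulVec_add, Matrix.mulVec_smul, dotProduct_add, add_dotProduct,
      add_dotProduct, dotProduct_smul, smul_dotProduct, smul_dotProduct,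
      dotProduct_smul] at h0
    have hsy := symm_dot hP.1 a b
    simp only [smul_eq_mul] at h0
    have hexp : (b ⬝ᵥ P.mulVec b) * (t * t) + (2 * (a ⬝ᵥ P.mulVec b)) * t
        + (a ⬝ᵥ P.mulVec a)
        = a ⬝ᵥ P *ᵥ a + t * b ⬝ᵥ P *ᵥ a + (t * a ⬝ᵥ P *ᵥ b + t * (t * b ⬝ᵥ P *ᵥ b)) := by
      rw [hsy]; ring
    linarith [h0, hexp.ge, hexp.le]
  have hd := discrim_le_zero key
  rw [discrim] at hd
  nlinarith [hd]

lemma inv_quad_le {M N : Matrix ι ι ℝ} (hN : N.PosDef) (hM : M.PosDef)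
    (h : loewnerLE N M) (x : ι → ℝ) :
    x ⬝ᵥ M⁻¹.mulVec x ≤ x ⬝ᵥ N⁻¹.mulVec x := by
  have hMa : M.mulVec (M⁻¹.mulVec x) = x := by
    rw [Matrix.mulVec_mulVec,
      Matrix.mul_nonsing_inv _ (isUnit_iff_isUnit_det _ |>.1 hM.isUnit), Matrix.one_mulVec]
  have hNb : N.mulVec (N⁻¹.mulVec x) = x := by
    rw [Matrix.mulVec_mulVec,
      Matrix.mul_nonsing_inv _ (isUnit_iff_isUnit_det _ |>.1 hN.isUnit), Matrix.one_mulVec]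
  have ht0 : 0 ≤ x ⬝ᵥ M⁻¹.mulVec x := quad_nonneg hM.inv.posSemidef x
  have hs0 : 0 ≤ x ⬝ᵥ N⁻¹.mulVec x := quad_nonneg hN.inv.posSemidef x
  have hcs := cs_ineq hN.posSemidef (M⁻¹.mulVec x) (N⁻¹.mulVec x)
  rw [hNb, dotProduct_comm (N⁻¹.mulVec x) x] at hcs
  have h1 : (M⁻¹.mulVec x) ⬝ᵥ x = x ⬝ᵥ M⁻¹.mulVec x := by rw [dotProduct_comm]
  have h3 : (M⁻¹.mulVec x) ⬝ᵥ N.mulVec (M⁻¹.mulVec x)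
      ≤ (M⁻¹.mulVec x) ⬝ᵥ M.mulVec (M⁻¹.mulVec x) := loewner_quad h (M⁻¹.mulVec x)
  rw [hMa, h1] at h3
  rw [h1] at hcs
  nlinarith [hcs, h3, ht0, hs0, quad_nonneg hN.posSemidef (M⁻¹.mulVec x)]

lemma psd_add {A B : Matrix ι ι ℝ} (hA : A.PosSemidef) (hB : B.PosSemidef) :
    (A + B).PosSemidef := by
  refine .of_dotProduct_mulVec_nonneg (hA.1.add hB.1) fun x => ?_
  have := hA.dotProduct_mulVec_nonneg x; have := hB.dotProduct_mulVec_nonneg x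
  rw [Matrix.add_mulVec, dotProduct_add]
  positivity

lemma herm_of_smul {c : ℝ} (hc : c ≠ 0) {P : Matrix ι ι ℝ} (h : (c • P).IsHermitian) :
    P.IsHermitian := by
  rw [Matrix.IsHermitian, conjTranspose_eq_transpose_of_trivial] at h ⊢
  rw [transpose_smul] at h
  exact smul_right_injective _ hc h

lemma psd_of_smul {c : ℝ} (hc : 0 < c) {P : Matrix ι ι ℝ} (h : (c • P).PosSemidef) :
    P.PosSemidef := by
  refine .of_dotProduct_mulVec_nonneg (herm_of_smul hc.ne' h.1) fun x => ?_
  have h2 := h.dotProduct_mulVec_nonneg x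
  rw [Matrix.smul_mulVec, dotProduct_smul, smul_eq_mul] at h2
  nlinarith [h2]

lemma psd_smul {c : ℝ} (hc : 0 ≤ c) {P : Matrix ι ι ℝ} (h : P.PosSemidef) :
    (c • P).PosSemidef := by
  refine .of_dotProduct_mulVec_nonneg ?_ (fun x => ?_)
  · rw [Matrix.IsHermitian, conjTranspose_eq_transpose_of_trivial, transpose_smul]
    have := h.1
    rw [Matrix.IsHermitian, conjTranspose_eq_transpose_of_trivial] at this
    rw [this]
  · have h2 := h.dotProduct_mulVec_nonneg x
    rw [Matrix.smul_mulVec, dotProduct_smul, smul_eq_mul]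
    positivity

lemma pd_smul {c : ℝ} (hc : 0 < c) {P : Matrix ι ι ℝ} (h : P.PosDef) :
    (c • P).PosDef := by
  refine .of_dotProduct_mulVec_pos (psd_smul hc.le h.posSemidef).1 fun x hx => ?_
  have h2 := h.dotProduct_mulVec_pos hx
  rw [Matrix.smul_mulVec, dotProduct_smul, smul_eq_mul]
  positivity

lemma smul_inv_eq {c : ℝ} (hc : c ≠ 0) {P : Matrix ι ι ℝ} (hP : IsUnit P.det) :
    (c • P)⁻¹ = c⁻¹ • P⁻¹ := by
  apply Matrix.inv_eq_right_inv
  rw [Matrix.smul_mul, Matrix.mul_smul, smul_smul, Matrix.mul_nonsing_inv _ hP,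
    mul_inv_cancel₀ hc, one_smul]

lemma dot_mulVec_transpose {κ : Type*} [Fintype κ] (M : Matrix ι κ ℝ) (d : κ → ℝ) (φ : ι → ℝ) :
    d ⬝ᵥ Mᵀ.mulVec φ = M.mulVec d ⬝ᵥ φ := by
  rw [Matrix.dotProduct_mulVec, Matrix.vecMul_transpose]

lemma dot_split {σ σ' : Type*} [Fintype σ] [Fintype σ'] (v w : σ ⊕ σ' → ℝ) :
    v ⬝ᵥ w = (v ∘ Sum.inl) ⬝ᵥ (w ∘ Sum.inl) + (v ∘ Sum.inr) ⬝ᵥ (w ∘ Sum.inr) := by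
  simp [dotProduct, Fintype.sum_sum_type, Function.comp]

lemma quad_calH {κ : Type*} [Fintype κ] (M1 M2 : Matrix ι ι ℝ)
    (U : Matrix (ι ⊕ ι) κ ℝ) (d : κ → ℝ) :
    d ⬝ᵥ (Uᵀ * calH M1 M2 * U).mulVec d
      = (U.mulVec d ∘ Sum.inl) ⬝ᵥ M1.mulVec (U.mulVec d ∘ Sum.inl)
        + (U.mulVec d ∘ Sum.inr) ⬝ᵥ M2⁻¹.mulVec (U.mulVec d ∘ Sum.inr) := by
  have h1 : (Uᵀ * calH M1 M2 * U).mulVec d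
      = Uᵀ.mulVec ((calH M1 M2).mulVec (U.mulVec d)) := by
    rw [Matrix.mulVec_mulVec, Matrix.mulVec_mulVec, Matrix.mul_assoc]
  rw [h1, dot_mulVec_transpose]
  have h2 : (calH M1 M2).mulVec (U.mulVec d)
      = Sum.elim (M1.mulVec (U.mulVec d ∘ Sum.inl)) (M2⁻¹.mulVec (U.mulVec d ∘ Sum.inr)) := by
    rw [calH, Matrix.fromBlocks_mulVec]
    simp
  rw [h2, dot_split]
  simp

lemma HbarU_mulVec {m : ℕ} (Φ : (Fin m → ℝ) → ℝ) (ξ ϑ τμ : ℝ) (uμ : Fin m → ℝ) :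
    (HbarU Φ ξ ϑ uμ τμ).mulVec (Sum.elim uμ fun _ => 1)
      = Sum.elim (fun i => -(1 / τμ ^ 2) * vgrad Φ uμ i)
          (fun _ => (1 / τμ ^ 2) * (vgrad Φ uμ ⬝ᵥ uμ) + ξ * ϑ / τμ ^ 2) := by
  funext i
  cases i with
  | inl i =>
    simp only [HbarU, Matrix.mulVec, dotProduct, Fintype.sum_sum_type, Matrix.of_apply,
      Sum.elim_inl, Sum.elim_inr, Finset.univ_unique, Finset.sum_singleton, Pi.sub_apply,
      Pi.neg_apply, Pi.smul_apply, smul_eq_mul, mul_one, Finset.mul_sum]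
    ring_nf
  | inr u =>
    cases u
    have hrw : (HbarU Φ ξ ϑ uμ τμ).mulVec (Sum.elim uμ fun _ => 1) (Sum.inr ())
        = (-((1 / τμ ^ 2) • (vhess Φ uμ).mulVec uμ) - (1 / τμ ^ 2) • vgrad Φ uμ) ⬝ᵥ uμ
          + ((2 / τμ ^ 2) * (vgrad Φ uμ ⬝ᵥ uμ) + (1 / τμ ^ 2) * (uμ ⬝ᵥ (vhess Φ uμ).mulVec uμ)
            + ξ * ϑ / τμ ^ 2) := by
      simp [HbarU, Matrix.mulVec, dotProduct, Fintype.sum_sum_type]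
    rw [hrw, sub_dotProduct, neg_dotProduct, smul_dotProduct, smul_dotProduct,
      dotProduct_comm ((vhess Φ uμ).mulVec uμ) uμ, Sum.elim_inr]
    simp only [smul_eq_mul]
    ring

end auxLemmas

set_option maxHeartbeats 1600000 in
/-- Dikin-type bound for the predictor direction. -/
theorem predictor_dikin_bound {m n p : ℕ} (A : Matrix (Fin m) (Fin n) ℝ)
    (c : Fin n → ℝ) (Dom : Set (Fin m → ℝ)) (ϑ : ℝ) (Φ : (Fin m → ℝ) → ℝ)
    (hΦ : IsSCBarrier ϑ Dom Φ)
    (hker : ∀ x : Fin n → ℝ, A.mulVec x = 0 → x = 0)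
    (ξ : ℝ) (hξ : 1 < ξ)
    (z0 : Fin m → ℝ) (hz0 : z0 ∈ Dom)
    (y0 : Fin m → ℝ) (hy0 : y0 = vgrad Φ z0)
    (yτ0 : ℝ) (hyτ0 : yτ0 = -(y0 ⬝ᵥ z0) - ξ * ϑ)
    (F : Matrix (Fin p) (Fin m) ℝ) (hF : rowsBasisOfKernel F Aᵀ)
    (cA : Fin m → ℝ) (hcA : Aᵀ.mulVec cA = c)
    (x : Fin n → ℝ) (τ : ℝ) (y : Fin m → ℝ)
    (hQ : InQDD A c Dom z0 y0 x τ y)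
    (μ : ℝ) (hμdef : μ = muOf A c ξ ϑ z0 yτ0 x τ y)
    (εbar : ℝ) (hε1 : 0 < εbar) (hε2 : εbar < 1)
    (xμ : Fin n → ℝ) (τμ : ℝ) (yμ : Fin m → ℝ)
    (hCP : CP A c Dom Φ ξ ϑ z0 y0 yτ0 μ xμ τμ yμ)
    (hs1a : loewnerLE ((1 - εbar) ^ 2 • HbarX A Φ ξ ϑ z0 xμ τμ) (HbarX A Φ ξ ϑ z0 x τ))
    (hs1b : loewnerLE (HbarX A Φ ξ ϑ z0 x τ) (((1 - εbar) ^ 2)⁻¹ • HbarX A Φ ξ ϑ z0 xμ τμ))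
    (Hhat : Matrix (Fin m ⊕ Unit) (Fin m ⊕ Unit) ℝ) (hHhat : Hhat.PosDef)
    (hs2a : loewnerLE ((1 - εbar) ^ 2 • (HbarX A Φ ξ ϑ z0 xμ τμ)⁻¹) (μ ^ 2 • Hhat⁻¹))
    (hs2b : loewnerLE (μ ^ 2 • Hhat⁻¹) (((1 - εbar) ^ 2)⁻¹ • (HbarX A Φ ξ ϑ z0 xμ τμ)⁻¹))
    (d : Fin n ⊕ (Unit ⊕ Fin p) → ℝ)
    (hd : ((matU A c cA F)ᵀ * calH (HbarX A Φ ξ ϑ z0 x τ) Hhat * matU A c cA F).mulVec d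
        = (μ ^ 2)⁻¹ • r0vec A c cA F y0 z0 yτ0) :
    d ⬝ᵥ ((matU A c cA F)ᵀ * calH (HbarX A Φ ξ ϑ z0 x τ) (μ ^ 2 • HbarX A Φ ξ ϑ z0 x τ) *
        matU A c cA F).mulVec d ≤ ((1 - εbar) ^ 6)⁻¹ * (ξ * ϑ / μ ^ 2) := by
  classical
  have hϑ : 1 ≤ ϑ := hΦ.2.1
  have he : 0 < 1 - εbar := by linarith
  have hc1 : 0 < (1 - εbar) ^ 2 := by positivity
  have hc1lt : (1 - εbar) ^ 2 < 1 := by nlinarith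
  have hξϑ : 0 ≤ ξ * ϑ := by nlinarith
  set P := HbarX A Φ ξ ϑ z0 xμ τμ with hPdef
  set Hb := HbarX A Φ ξ ϑ z0 x τ with hHbdef
  set U := matU A c cA F with hUdef
  have a1 : (Hb - (1 - εbar) ^ 2 • P).PosSemidef := hs1a
  have b1 : (((1 - εbar) ^ 2)⁻¹ • P - Hb).PosSemidef := hs1b
  have hinvgap : 0 < ((1 - εbar) ^ 2)⁻¹ - (1 - εbar) ^ 2 := by
    nlinarith [mul_inv_cancel₀ (ne_of_gt hc1), hc1, hc1lt]
  have hPpsd : P.PosSemidef := by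
    apply psd_of_smul hinvgap
    have hrw : (((1 - εbar) ^ 2)⁻¹ - (1 - εbar) ^ 2) • P
        = (Hb - (1 - εbar) ^ 2 • P) + (((1 - εbar) ^ 2)⁻¹ • P - Hb) := by
      rw [sub_smul]; abel
    rw [hrw]; exact psd_add a1 b1
  have hHbpsd : Hb.PosSemidef := by
    have hrw : Hb = (Hb - (1 - εbar) ^ 2 • P) + (1 - εbar) ^ 2 • P := by abel
    rw [hrw]; exact psd_add a1 (psd_smul hc1.le hPpsd)
  have hHhatInvPD : Hhat⁻¹.PosDef := hHhat.inv
  -- decomposition of U *ᵥ d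
  set dx : Fin n → ℝ := fun j => d (Sum.inl j) with hdx
  set dτ : ℝ := d (Sum.inr (Sum.inl ())) with hdτ
  set dq : Fin p → ℝ := fun k => d (Sum.inr (Sum.inr k)) with hdq
  set v := U.mulVec d with hvdef
  have hv1 : v ∘ Sum.inl = Sum.elim (A.mulVec dx) (fun _ => dτ) := by
    funext i
    cases i with
    | inl i =>
      simp [hvdef, hUdef, matU, Matrix.mulVec, dotProduct, Fintype.sum_sum_type, hdx]
    | inr u =>
      cases u
      simp [hvdef, hUdef, matU, Matrix.mulVec, dotProduct, Fintype.sum_sum_type, hdτ]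
  have hv2 : v ∘ Sum.inr = Sum.elim
      (fun i => -(cA i * dτ) - Fᵀ.mulVec dq i) (fun _ => c ⬝ᵥ dx) := by
    funext i
    cases i with
    | inl i =>
      simp [hvdef, hUdef, matU, Matrix.mulVec, dotProduct, Fintype.sum_sum_type,
        hdx, hdτ, hdq, Matrix.transpose_apply, neg_mul, Finset.sum_neg_distrib]
      ring
    | inr u =>
      cases u
      simp [hvdef, hUdef, matU, Matrix.mulVec, dotProduct, Fintype.sum_sum_type, hdx]
  have hFA0 : ∀ k, Aᵀ.mulVec (F k) = 0 := by
    intro k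
    have hk : F k ∈ LinearMap.ker Aᵀ.mulVecLin := by
      rw [← hF.2]; exact Submodule.subset_span ⟨k, rfl⟩
    rw [LinearMap.mem_ker] at hk
    rw [← Matrix.mulVecLin_apply]; exact hk
  have hFA : F * A = 0 := by
    ext k j
    have h0 := congrFun (hFA0 k) j
    simp only [Matrix.mulVec, dotProduct, Matrix.transpose_apply, Pi.zero_apply] at h0
    simp only [Matrix.mul_apply, Matrix.zero_apply]
    rw [← h0]
    exact Finset.sum_congr rfl fun i _ => mul_comm _ _
  have hcAA : ∀ xx : Fin n → ℝ, cA ⬝ᵥ A.mulVec xx = c ⬝ᵥ xx := by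
    intro xx
    rw [Matrix.dotProduct_mulVec, ← Matrix.mulVec_transpose, hcA]
  have hdotFA : ∀ (q : Fin p → ℝ) (xx : Fin n → ℝ), (A.mulVec xx) ⬝ᵥ (Fᵀ.mulVec q) = 0 := by
    intro q xx
    rw [dotProduct_comm, Matrix.dotProduct_mulVec, ← Matrix.mulVec_transpose,
      Matrix.mulVec_mulVec, ← Matrix.transpose_mul, hFA, Matrix.transpose_zero,
      Matrix.zero_mulVec, zero_dotProduct]
  have horth : (v ∘ Sum.inl) ⬝ᵥ (v ∘ Sum.inr) = 0 := by
    rw [hv1, hv2, sumElim_dotProduct_sumElim]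
    have h1 : (fun i => -(cA i * dτ) - Fᵀ.mulVec dq i) = (-(dτ • cA) - Fᵀ.mulVec dq) := by
      funext i; simp [mul_comm]
    rw [h1, dotProduct_sub, dotProduct_neg, dotProduct_smul, hdotFA dq dx]
    have h2 : A.mulVec dx ⬝ᵥ cA = c ⬝ᵥ dx := by
      rw [dotProduct_comm]; exact hcAA dx
    have h3 : (fun _ : Unit => dτ) ⬝ᵥ (fun _ => c ⬝ᵥ dx) = dτ * (c ⬝ᵥ dx) := by
      simp [dotProduct]
    rw [h3, h2]
    simp [smul_eq_mul]
  by_cases hμ : μ = 0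
  · -- degenerate case
    have hrhs : ((1 - εbar) ^ 6)⁻¹ * (ξ * ϑ / μ ^ 2) = 0 := by
      rw [hμ]; norm_num
    have hdz : (Uᵀ * calH Hb Hhat * U).mulVec d = 0 := by
      rw [hd, hμ]; norm_num
    have hT1 := quad_calH Hb Hhat U d
    rw [hdz] at hT1
    simp only [dotProduct_zero] at hT1
    have hT'1 := quad_calH Hb (μ ^ 2 • Hb) U d
    have hzz : (μ ^ 2 • Hb)⁻¹ = 0 := by
      rw [hμ]; norm_num [Matrix.inv_zero]
    rw [hzz] at hT'1
    rw [hT'1, hrhs]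
    have e1 : 0 ≤ (U.mulVec d ∘ Sum.inl) ⬝ᵥ Hb.mulVec (U.mulVec d ∘ Sum.inl) :=
      quad_nonneg hHbpsd _
    have e2 : 0 ≤ (U.mulVec d ∘ Sum.inr) ⬝ᵥ Hhat⁻¹.mulVec (U.mulVec d ∘ Sum.inr) :=
      quad_nonneg hHhatInvPD.posSemidef _
    have e3 : (U.mulVec d ∘ Sum.inr) ⬝ᵥ (0 : Matrix (Fin m ⊕ Unit) (Fin m ⊕ Unit) ℝ).mulVec
        (U.mulVec d ∘ Sum.inr) = 0 := by simp
    rw [e3]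
    rw [← hvdef] at hT1 e1 e2 ⊢
    linarith
  · -- main case
    have hμ2 : 0 < μ ^ 2 := by positivity
    have a2 : (μ ^ 2 • Hhat⁻¹ - (1 - εbar) ^ 2 • P⁻¹).PosSemidef := hs2a
    have b2 : (((1 - εbar) ^ 2)⁻¹ • P⁻¹ - μ ^ 2 • Hhat⁻¹).PosSemidef := hs2b
    have hPinvPsd : P⁻¹.PosSemidef := by
      apply psd_of_smul hinvgap
      have hrw : (((1 - εbar) ^ 2)⁻¹ - (1 - εbar) ^ 2) • P⁻¹
          = (μ ^ 2 • Hhat⁻¹ - (1 - εbar) ^ 2 • P⁻¹)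
            + (((1 - εbar) ^ 2)⁻¹ • P⁻¹ - μ ^ 2 • Hhat⁻¹) := by
        rw [sub_smul]; abel
      rw [hrw]; exact psd_add a2 b2
    have hPinvPD : P⁻¹.PosDef := by
      refine .of_dotProduct_mulVec_pos hPinvPsd.1 fun zz hzz => ?_
      have hq := quad_nonneg b2 zz
      rw [Matrix.sub_mulVec, dotProduct_sub, Matrix.smul_mulVec,
        Matrix.smul_mulVec, dotProduct_smul, dotProduct_smul, smul_eq_mul,
        smul_eq_mul] at hq
      have hpos : 0 < zz ⬝ᵥ Hhat⁻¹.mulVec zz := quad_pos hHhatInvPD hzz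
      have hstar : star zz = zz := by funext i; exact star_trivial _
      rw [hstar]
      nlinarith [hq, hpos, hμ2, hc1, mul_inv_cancel₀ (ne_of_gt hc1)]
    have hPPD : P.PosDef := Matrix.posDef_inv_iff.mp hPinvPD
    have hPdet : IsUnit P.det := isUnit_iff_isUnit_det _ |>.1 hPPD.isUnit
    have hHbPD : Hb.PosDef := by
      refine .of_dotProduct_mulVec_pos hHbpsd.1 fun zz hzz => ?_
      have hq := quad_nonneg a1 zz
      rw [Matrix.sub_mulVec, dotProduct_sub, Matrix.smul_mulVec,
        dotProduct_smul, smul_eq_mul] at hq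
      have hpos : 0 < zz ⬝ᵥ P.mulVec zz := quad_pos hPPD hzz
      have hstar : star zz = zz := by funext i; exact star_trivial _
      rw [hstar]
      nlinarith [hq, hpos, hc1]
    have hHbdet : IsUnit Hb.det := isUnit_iff_isUnit_det _ |>.1 hHbPD.isUnit
    -- central path data
    obtain ⟨⟨huD, hτμ, hAy, hyD⟩, hyμ, hc3⟩ := hCP
    have hτμ0 : τμ ≠ 0 := ne_of_gt hτμ
    set uμ := uOf A z0 xμ τμ with huμdef
    set g := vgrad Φ uμ with hgdef
    set w : (Fin m ⊕ Unit) → ℝ := Sum.elim uμ (fun _ => 1) with hwdef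
    have hg : ∀ i, g i = (τμ / μ) * yμ i := by
      intro i
      have h := congrFun hyμ i
      simp only [Pi.smul_apply, smul_eq_mul] at h
      rw [h]; field_simp
    have hPH : P = HbarU Φ ξ ϑ uμ τμ := rfl
    have hPw : P.mulVec w = Sum.elim (fun i => -(1 / τμ ^ 2) * g i)
        (fun _ => (1 / τμ ^ 2) * (g ⬝ᵥ uμ) + ξ * ϑ / τμ ^ 2) := by
      rw [hPH, hwdef, hgdef]
      exact HbarU_mulVec Φ ξ ϑ τμ uμ
    have hwPw : w ⬝ᵥ P.mulVec w = ξ * ϑ / τμ ^ 2 := by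
      rw [hPw, hwdef, sumElim_dotProduct_sumElim]
      have h1 : uμ ⬝ᵥ (fun i => -(1 / τμ ^ 2) * g i) = -(1 / τμ ^ 2) * (g ⬝ᵥ uμ) := by
        simp only [dotProduct, Finset.mul_sum]
        exact Finset.sum_congr rfl fun i _ => by ring
      have h2 : (fun _ : Unit => (1 : ℝ)) ⬝ᵥ (fun _ => (1 / τμ ^ 2) * (g ⬝ᵥ uμ) + ξ * ϑ / τμ ^ 2)
          = (1 / τμ ^ 2) * (g ⬝ᵥ uμ) + ξ * ϑ / τμ ^ 2 := by simp [dotProduct]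
      rw [h1, h2]; ring
    -- the lifted residual vector
    set φ : ((Fin m ⊕ Unit) ⊕ (Fin m ⊕ Unit)) → ℝ :=
      Sum.elim ((τμ / μ) • P.mulVec w) ((-(τμ / μ ^ 2)) • w) with hφdef
    have hCI : (μ ^ 2)⁻¹ • r0vec A c cA F y0 z0 yτ0 = Uᵀ.mulVec φ := by
      funext j
      have hUφ : Uᵀ.mulVec φ j = ∑ i : Fin m, U (Sum.inl (Sum.inl i)) j * φ (Sum.inl (Sum.inl i))
          + U (Sum.inl (Sum.inr ())) j * φ (Sum.inl (Sum.inr ()))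
          + (∑ i : Fin m, U (Sum.inr (Sum.inl i)) j * φ (Sum.inr (Sum.inl i))
          + U (Sum.inr (Sum.inr ())) j * φ (Sum.inr (Sum.inr ()))) := by
        simp [Matrix.mulVec, dotProduct, Fintype.sum_sum_type, Matrix.transpose_apply]
      rw [hUφ]
      have hφll : ∀ i : Fin m, φ (Sum.inl (Sum.inl i)) = (τμ / μ) * (-(1 / τμ ^ 2) * g i) := by
        intro i
        show ((τμ / μ) • P.mulVec w) (Sum.inl i) = _
        rw [Pi.smul_apply, hPw, Sum.elim_inl, smul_eq_mul]
      have hφlr : φ (Sum.inl (Sum.inr ())) =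
          (τμ / μ) * ((1 / τμ ^ 2) * (g ⬝ᵥ uμ) + ξ * ϑ / τμ ^ 2) := by
        show ((τμ / μ) • P.mulVec w) (Sum.inr ()) = _
        rw [Pi.smul_apply, hPw, Sum.elim_inr, smul_eq_mul]
      have hφrl : ∀ i : Fin m, φ (Sum.inr (Sum.inl i)) = -(τμ / μ ^ 2) * uμ i := by
        intro i
        show ((-(τμ / μ ^ 2)) • w) (Sum.inl i) = _
        rw [Pi.smul_apply, hwdef, Sum.elim_inl, smul_eq_mul]
      have hφrr : φ (Sum.inr (Sum.inr ())) = -(τμ / μ ^ 2) := by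
        show ((-(τμ / μ ^ 2)) • w) (Sum.inr ()) = _
        rw [Pi.smul_apply, hwdef, Sum.elim_inr, smul_eq_mul, mul_one]
      rcases j with j | j
      · -- Fin n component
        have hlhs : ((μ ^ 2)⁻¹ • r0vec A c cA F y0 z0 yτ0) (Sum.inl j)
            = (μ ^ 2)⁻¹ * (-(Aᵀ.mulVec y0) j - c j) := by
          simp [r0vec]
        rw [hlhs]
        have hU1 : ∀ i : Fin m, U (Sum.inl (Sum.inl i)) (Sum.inl j) = A i j := by
          intro i; simp [hUdef, matU]
        have hU2 : U (Sum.inl (Sum.inr ())) (Sum.inl j) = 0 := by simp [hUdef, matU]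
        have hU3 : ∀ i : Fin m, U (Sum.inr (Sum.inl i)) (Sum.inl j) = 0 := by
          intro i; simp [hUdef, matU]
        have hU4 : U (Sum.inr (Sum.inr ())) (Sum.inl j) = c j := by simp [hUdef, matU]
        simp only [hU1, hU2, hU3, hU4, hφll, hφrr, zero_mul, add_zero, zero_add,
          Finset.sum_const_zero]
        have hsum : ∑ i : Fin m, A i j * ((τμ / μ) * (-(1 / τμ ^ 2) * g i))
            = -(μ ^ 2)⁻¹ * ∑ i : Fin m, A i j * yμ i := by
          rw [Finset.mul_sum]
          apply Finset.sum_congr rfl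
          intro i _
          rw [hg i]
          field_simp
        rw [hsum]
        have hAyj : (∑ i : Fin m, A i j * yμ i) - (∑ i : Fin m, A i j * y0 i)
            = -((τμ - 1) * c j) := by
          have h := congrFun hAy j
          simpa [Matrix.mulVec, dotProduct, Matrix.transpose_apply] using h
        have hA0j : (Aᵀ.mulVec y0) j = ∑ i : Fin m, A i j * y0 i := by
          simp [Matrix.mulVec, dotProduct, Matrix.transpose_apply]
        rw [hA0j]
        have hyμj : (∑ i : Fin m, A i j * yμ i)
            = (∑ i : Fin m, A i j * y0 i) - (τμ - 1) * c j := by linarith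
        rw [hyμj]
        field_simp
        ring
      · rcases j with u | k
        · -- Unit component
          cases u
          have hlhs : ((μ ^ 2)⁻¹ • r0vec A c cA F y0 z0 yτ0) (Sum.inr (Sum.inl ()))
              = (μ ^ 2)⁻¹ * (-yτ0 + cA ⬝ᵥ z0) := by
            simp [r0vec]
          rw [hlhs]
          have hU1 : ∀ i : Fin m, U (Sum.inl (Sum.inl i)) (Sum.inr (Sum.inl ())) = 0 := by
            intro i; simp [hUdef, matU]
          have hU2 : U (Sum.inl (Sum.inr ())) (Sum.inr (Sum.inl ())) = 1 := by
            simp [hUdef, matU]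
          have hU3 : ∀ i : Fin m, U (Sum.inr (Sum.inl i)) (Sum.inr (Sum.inl ())) = -cA i := by
            intro i; simp [hUdef, matU]
          have hU4 : U (Sum.inr (Sum.inr ())) (Sum.inr (Sum.inl ())) = 0 := by
            simp [hUdef, matU]
          simp only [hU1, hU2, hU3, hU4, hφlr, hφrl, zero_mul, one_mul, add_zero, zero_add,
            mul_zero, Finset.sum_const_zero]
          have hsum : ∑ i : Fin m, -cA i * (-(τμ / μ ^ 2) * uμ i)
              = (τμ / μ ^ 2) * (cA ⬝ᵥ uμ) := by
            simp only [dotProduct, Finset.mul_sum]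
            exact Finset.sum_congr rfl fun i _ => by ring
          rw [hsum]
          have hgu : g ⬝ᵥ uμ = (τμ / μ) * (yμ ⬝ᵥ uμ) := by
            simp only [dotProduct, Finset.mul_sum]
            apply Finset.sum_congr rfl
            intro i _; rw [hg i]; ring
          have hcu : cA ⬝ᵥ uμ = c ⬝ᵥ xμ + τμ⁻¹ * (cA ⬝ᵥ z0) := by
            rw [huμdef, uOf, dotProduct_add, dotProduct_smul, smul_eq_mul, hcAA xμ]
          have hY : yμ ⬝ᵥ uμ = -(ξ * ϑ * μ) / τμ - yτ0 - τμ * (c ⬝ᵥ xμ) := by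
            have key : τμ⁻¹ * (yμ ⬝ᵥ uμ)
                = -(ξ * ϑ * μ) / τμ ^ 2 - yτ0 / τμ - c ⬝ᵥ xμ := by linarith [hc3]
            calc yμ ⬝ᵥ uμ = τμ * (τμ⁻¹ * (yμ ⬝ᵥ uμ)) := by field_simp
              _ = τμ * (-(ξ * ϑ * μ) / τμ ^ 2 - yτ0 / τμ - c ⬝ᵥ xμ) := by rw [key]
              _ = -(ξ * ϑ * μ) / τμ - yτ0 - τμ * (c ⬝ᵥ xμ) := by field_simp
          rw [hgu, hcu, hY]
          field_simp
          ring
        · -- Fin p component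
          have hlhs : ((μ ^ 2)⁻¹ • r0vec A c cA F y0 z0 yτ0) (Sum.inr (Sum.inr k))
              = (μ ^ 2)⁻¹ * (F.mulVec z0 k) := by
            simp [r0vec]
          rw [hlhs]
          have hU1 : ∀ i : Fin m, U (Sum.inl (Sum.inl i)) (Sum.inr (Sum.inr k)) = 0 := by
            intro i; simp [hUdef, matU]
          have hU2 : U (Sum.inl (Sum.inr ())) (Sum.inr (Sum.inr k)) = 0 := by
            simp [hUdef, matU]
          have hU3 : ∀ i : Fin m, U (Sum.inr (Sum.inl i)) (Sum.inr (Sum.inr k)) = -F k i := by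
            intro i; simp [hUdef, matU]
          have hU4 : U (Sum.inr (Sum.inr ())) (Sum.inr (Sum.inr k)) = 0 := by
            simp [hUdef, matU]
          simp only [hU1, hU2, hU3, hU4, hφrl, zero_mul, add_zero, zero_add, mul_zero,
            Finset.sum_const_zero]
          have hsum : ∑ i : Fin m, -F k i * (-(τμ / μ ^ 2) * uμ i)
              = (τμ / μ ^ 2) * (F k ⬝ᵥ uμ) := by
            simp only [dotProduct, Finset.mul_sum]
            exact Finset.sum_congr rfl fun i _ => by ring
          rw [hsum]
          have hFk : F k ⬝ᵥ uμ = τμ⁻¹ * (F.mulVec z0 k) := by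
            rw [huμdef, uOf, dotProduct_add, dotProduct_smul, smul_eq_mul]
            have h0 : F k ⬝ᵥ A.mulVec xμ = 0 := by
              have : F.mulVec (A.mulVec xμ) = (F * A).mulVec xμ := by
                rw [Matrix.mulVec_mulVec]
              have h1 := congrFun this k
              rw [hFA, Matrix.zero_mulVec] at h1
              simpa [Matrix.mulVec] using h1
            rw [h0]
            simp [Matrix.mulVec]
          rw [hFk]
          field_simp
    -- quadratic form computations
    have hdd : (Uᵀ * calH Hb Hhat * U).mulVec d = Uᵀ.mulVec φ := by rw [hd, hCI]
    have hT1 := quad_calH Hb Hhat U d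
    have hT'1 := quad_calH Hb (μ ^ 2 • Hb) U d
    rw [← hvdef] at hT1 hT'1
    set v1 := v ∘ Sum.inl with hv1def
    set v2 := v ∘ Sum.inr with hv2def
    have hPherm : P.IsHermitian := hPpsd.1
    have hPinvherm : P⁻¹.IsHermitian := hPinvPD.1
    have hT2 : d ⬝ᵥ (Uᵀ * calH Hb Hhat * U).mulVec d
        = (τμ / μ) * (v1 ⬝ᵥ P.mulVec w) - (τμ / μ ^ 2) * (v2 ⬝ᵥ w) := by
      rw [hdd, dot_mulVec_transpose, ← hvdef, dot_split v φ]
      have hφl : φ ∘ Sum.inl = (τμ / μ) • P.mulVec w := by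
        funext i; simp [hφdef]
      have hφr : φ ∘ Sum.inr = (-(τμ / μ ^ 2)) • w := by
        funext i; simp [hφdef]
      rw [hφl, hφr, dotProduct_smul, dotProduct_smul, smul_eq_mul, smul_eq_mul]
      ring
    set sv : (Fin m ⊕ Unit) → ℝ := (τμ / μ) • w with hsv
    set z : (Fin m ⊕ Unit) → ℝ := P.mulVec v1 - μ⁻¹ • v2 with hz
    have hTz : (τμ / μ) * (v1 ⬝ᵥ P.mulVec w) - (τμ / μ ^ 2) * (v2 ⬝ᵥ w) = sv ⬝ᵥ z := by
      rw [hsv, hz, smul_dotProduct, dotProduct_sub, dotProduct_smul]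
      rw [symm_dot hPherm w v1, dotProduct_comm w v2]
      simp only [smul_eq_mul]
      field_simp
    have hsPs : sv ⬝ᵥ P.mulVec sv = ξ * ϑ / μ ^ 2 := by
      rw [hsv, Matrix.mulVec_smul, smul_dotProduct, dotProduct_smul, smul_eq_mul, smul_eq_mul,
        hwPw]
      field_simp
    have hPPinv : P * P⁻¹ = 1 := Matrix.mul_nonsing_inv _ hPdet
    have hPinvP : P⁻¹ * P = 1 := Matrix.nonsing_inv_mul _ hPdet
    have hPz : P.mulVec (P⁻¹.mulVec z) = z := by
      rw [Matrix.mulVec_mulVec, hPPinv, Matrix.one_mulVec]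
    have hzPz : z ⬝ᵥ P⁻¹.mulVec z
        = v1 ⬝ᵥ P.mulVec v1 + (μ ^ 2)⁻¹ * (v2 ⬝ᵥ P⁻¹.mulVec v2) := by
      have hinvz : P⁻¹.mulVec z = v1 - μ⁻¹ • P⁻¹.mulVec v2 := by
        rw [hz, Matrix.mulVec_sub, Matrix.mulVec_smul, Matrix.mulVec_mulVec, hPinvP,
          Matrix.one_mulVec]
      rw [hinvz, hz]
      rw [sub_dotProduct, dotProduct_sub, dotProduct_sub, smul_dotProduct,
        dotProduct_smul, dotProduct_smul]
      have e1 : P.mulVec v1 ⬝ᵥ v1 = v1 ⬝ᵥ P.mulVec v1 := dotProduct_comm _ _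
      have e2 : P.mulVec v1 ⬝ᵥ P⁻¹.mulVec v2 = v2 ⬝ᵥ v1 := by
        rw [symm_dot hPinvherm (P.mulVec v1) v2, Matrix.mulVec_mulVec, hPinvP,
          Matrix.one_mulVec]
      have e3 : v2 ⬝ᵥ v1 = 0 := by rw [dotProduct_comm]; exact horth
      rw [e1, e2, e3]
      simp only [smul_eq_mul, mul_zero]
      have e4 : v2 ⬝ᵥ P⁻¹.mulVec v2 = v2 ⬝ᵥ P⁻¹.mulVec v2 := rfl
      simp only [smul_dotProduct, smul_eq_mul]
      field_simp
      ring
    have hcs2 : (sv ⬝ᵥ z) ^ 2 ≤ (ξ * ϑ / μ ^ 2) * (z ⬝ᵥ P⁻¹.mulVec z) := by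
      have hcs := cs_ineq hPPD.posSemidef sv (P⁻¹.mulVec z)
      rw [hPz, hsPs] at hcs
      have e5 : P⁻¹.mulVec z ⬝ᵥ z = z ⬝ᵥ P⁻¹.mulVec z := dotProduct_comm _ _
      calc (sv ⬝ᵥ z) ^ 2 ≤ (ξ * ϑ / μ ^ 2) * (P⁻¹.mulVec z ⬝ᵥ z) := hcs
        _ = (ξ * ϑ / μ ^ 2) * (z ⬝ᵥ P⁻¹.mulVec z) := by rw [e5]
    -- the key scalar quantities
    have hS0 : 0 ≤ (v1 ⬝ᵥ P.mulVec v1 + (μ ^ 2)⁻¹ * (v2 ⬝ᵥ P⁻¹.mulVec v2)) := by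
      have q1 := quad_nonneg hPPD.posSemidef v1
      have q2 := quad_nonneg hPinvPD.posSemidef v2
      have q3 : (0:ℝ) ≤ (μ ^ 2)⁻¹ := by positivity
      nlinarith [q1, q2, q3]
    have hB0 : 0 ≤ ξ * ϑ / μ ^ 2 := by positivity
    have hTS : (1 - εbar) ^ 2 * (v1 ⬝ᵥ P.mulVec v1 + (μ ^ 2)⁻¹ * (v2 ⬝ᵥ P⁻¹.mulVec v2)) ≤ (d ⬝ᵥ (Uᵀ * calH Hb Hhat * U).mulVec d) := by
      have k1 : v1 ⬝ᵥ ((1 - εbar) ^ 2 • P).mulVec v1 ≤ v1 ⬝ᵥ Hb.mulVec v1 :=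
        loewner_quad hs1a v1
      have k2 : v2 ⬝ᵥ ((1 - εbar) ^ 2 • P⁻¹).mulVec v2 ≤ v2 ⬝ᵥ (μ ^ 2 • Hhat⁻¹).mulVec v2 :=
        loewner_quad hs2a v2
      rw [Matrix.smul_mulVec, dotProduct_smul, smul_eq_mul] at k1
      rw [Matrix.smul_mulVec, Matrix.smul_mulVec, dotProduct_smul,
        dotProduct_smul, smul_eq_mul, smul_eq_mul] at k2
      rw [hT1]
      have hmu2' : (μ ^ 2)⁻¹ * ((1 - εbar) ^ 2 * (v2 ⬝ᵥ P⁻¹.mulVec v2))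
          ≤ v2 ⬝ᵥ Hhat⁻¹.mulVec v2 := by
        rw [← mul_le_mul_iff_of_pos_left hμ2]
        calc μ ^ 2 * ((μ ^ 2)⁻¹ * ((1 - εbar) ^ 2 * (v2 ⬝ᵥ P⁻¹.mulVec v2)))
            = (1 - εbar) ^ 2 * (v2 ⬝ᵥ P⁻¹.mulVec v2) := by
              field_simp
          _ ≤ μ ^ 2 * (v2 ⬝ᵥ Hhat⁻¹.mulVec v2) := k2
      nlinarith [k1, hmu2']
    have hT0 : 0 ≤ (d ⬝ᵥ (Uᵀ * calH Hb Hhat * U).mulVec d) := le_trans (by nlinarith [hS0, hc1]) hTS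
    have hTeq : (d ⬝ᵥ (Uᵀ * calH Hb Hhat * U).mulVec d) = sv ⬝ᵥ z := by rw [hT2, hTz]
    have hTsq : (d ⬝ᵥ (Uᵀ * calH Hb Hhat * U).mulVec d) ^ 2 ≤ (ξ * ϑ / μ ^ 2) * (v1 ⬝ᵥ P.mulVec v1 + (μ ^ 2)⁻¹ * (v2 ⬝ᵥ P⁻¹.mulVec v2)) := by
      rw [hTeq]
      calc (sv ⬝ᵥ z) ^ 2 ≤ (ξ * ϑ / μ ^ 2) * (z ⬝ᵥ P⁻¹.mulVec z) := hcs2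
        _ = (ξ * ϑ / μ ^ 2) * (v1 ⬝ᵥ P.mulVec v1 + (μ ^ 2)⁻¹ * (v2 ⬝ᵥ P⁻¹.mulVec v2)) := by rw [hzPz]
    have hSB : ((1 - εbar) ^ 2) ^ 2 * (v1 ⬝ᵥ P.mulVec v1 + (μ ^ 2)⁻¹ * (v2 ⬝ᵥ P⁻¹.mulVec v2)) ≤ ξ * ϑ / μ ^ 2 := by
      rcases eq_or_lt_of_le hS0 with hSz | hSpos
      · rw [← hSz]; simpa using hB0
      · have hsq := mul_self_le_mul_self
          (mul_nonneg hc1.le hS0) hTS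
        nlinarith [hsq, hTsq, hSpos, hc1]
    -- final bound
    have hfin1 : v1 ⬝ᵥ Hb.mulVec v1 ≤ ((1 - εbar) ^ 2)⁻¹ * (v1 ⬝ᵥ P.mulVec v1) := by
      have := loewner_quad hs1b v1
      rwa [Matrix.smul_mulVec, dotProduct_smul, smul_eq_mul] at this
    have hfin2 : v2 ⬝ᵥ Hb⁻¹.mulVec v2 ≤ ((1 - εbar) ^ 2)⁻¹ * (v2 ⬝ᵥ P⁻¹.mulVec v2) := by
      have hNpd : ((1 - εbar) ^ 2 • P).PosDef := pd_smul hc1 hPPD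
      have := inv_quad_le hNpd hHbPD hs1a v2
      rwa [smul_inv_eq (ne_of_gt hc1) hPdet, Matrix.smul_mulVec, dotProduct_smul,
        smul_eq_mul] at this
    have hsmulinv : (μ ^ 2 • Hb)⁻¹ = (μ ^ 2)⁻¹ • Hb⁻¹ :=
      smul_inv_eq (ne_of_gt hμ2) hHbdet
    rw [hT'1, hsmulinv, Matrix.smul_mulVec, dotProduct_smul, smul_eq_mul]
    have hc1inv : 0 < ((1 - εbar) ^ 2)⁻¹ := by positivity
    have hstep : v1 ⬝ᵥ Hb.mulVec v1 + (μ ^ 2)⁻¹ * (v2 ⬝ᵥ Hb⁻¹.mulVec v2)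
        ≤ ((1 - εbar) ^ 2)⁻¹ * (v1 ⬝ᵥ P.mulVec v1 + (μ ^ 2)⁻¹ * (v2 ⬝ᵥ P⁻¹.mulVec v2)) := by
      have h2' : (μ ^ 2)⁻¹ * (v2 ⬝ᵥ Hb⁻¹.mulVec v2)
          ≤ (μ ^ 2)⁻¹ * (((1 - εbar) ^ 2)⁻¹ * (v2 ⬝ᵥ P⁻¹.mulVec v2)) :=
        mul_le_mul_of_nonneg_left hfin2 (by positivity)
      rw [mul_add]
      exact add_le_add hfin1 (by rw [mul_comm (((1 - εbar) ^ 2)⁻¹) ((μ ^ 2)⁻¹ * (v2 ⬝ᵥ P⁻¹.mulVec v2))] at *; linarith [h2'])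
    have hfinal : ((1 - εbar) ^ 2)⁻¹ * (v1 ⬝ᵥ P.mulVec v1 + (μ ^ 2)⁻¹ * (v2 ⬝ᵥ P⁻¹.mulVec v2))
        ≤ ((1 - εbar) ^ 6)⁻¹ * (ξ * ϑ / μ ^ 2) := by
      have hpow : ((1 - εbar) ^ 6)⁻¹ = (((1 - εbar) ^ 2)⁻¹) ^ 3 := by
        rw [inv_pow]
        congr 1
        ring
      rw [hpow]
      have hmul := mul_le_mul_of_nonneg_left hSB
        (le_of_lt (mul_pos hc1inv (mul_pos hc1inv hc1inv)))
      have hcc : ((1 - εbar) ^ 2)⁻¹ * (((1 - εbar) ^ 2)⁻¹ * ((1 - εbar) ^ 2)⁻¹)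
          * (((1 - εbar) ^ 2) ^ 2 * (v1 ⬝ᵥ P.mulVec v1 + (μ ^ 2)⁻¹ * (v2 ⬝ᵥ P⁻¹.mulVec v2))) = ((1 - εbar) ^ 2)⁻¹ * (v1 ⬝ᵥ P.mulVec v1 + (μ ^ 2)⁻¹ * (v2 ⬝ᵥ P⁻¹.mulVec v2)) := by
        have hci : ((1 - εbar) ^ 2)⁻¹ * (1 - εbar) ^ 2 = 1 := inv_mul_cancel₀ (ne_of_gt hc1)
        linear_combination (((1 - εbar) ^ 2)⁻¹ * (v1 ⬝ᵥ P.mulVec v1 + (μ ^ 2)⁻¹ * (v2 ⬝ᵥ P⁻¹.mulVec v2))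
          * (((1 - εbar) ^ 2)⁻¹ * (1 - εbar) ^ 2 + 1)) * hci
      rw [hcc] at hmul
      calc ((1 - εbar) ^ 2)⁻¹ * (v1 ⬝ᵥ P.mulVec v1 + (μ ^ 2)⁻¹ * (v2 ⬝ᵥ P⁻¹.mulVec v2))
          ≤ ((1 - εbar) ^ 2)⁻¹ * (((1 - εbar) ^ 2)⁻¹ * ((1 - εbar) ^ 2)⁻¹)
            * (ξ * ϑ / μ ^ 2) := hmul
        _ = (((1 - εbar) ^ 2)⁻¹) ^ 3 * (ξ * ϑ / μ ^ 2) := by ring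
    linarith [hstep, hfinal]
end
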